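/- arXiv:1412.1608 — 10 statements merged into one kernel-verified Lean document; each statement's English description precedes it below -/
import Mathlib

section
/- Let G be a finite abelian group of type (n_1, …, n_r), i.e., G ≅ ℤ_{n_1} × ⋯ × ℤ_{n_r} with n_1 ≥ 2 and n_i dividing n_{i+1} for each i, and let n = n_1⋯n_r be its order. For all positive integers m ≤ n and h, ρ±(G, m, h) ≤ min{f_d(m, h) : d ∈ D(G, m)}, where D(G, m) = {d dividing n : d = d_1⋯d_r with each d_i dividing n_i and d·n_r ≥ d_r·m}. -/
open Finset Pointwise

/-- The `h`-fold sumset of a finite subset `A` of an abelian group: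
`hA = {Σ λ_a • a : λ : A → ℕ, Σ λ_a = h}`. -/
def foldSumset {G : Type*} [AddCommGroup G] (h : ℕ) (A : Finset G) : Set G :=
  {g | ∃ c : G → ℕ, (∑ a ∈ A, c a) = h ∧ (∑ a ∈ A, c a • a) = g}

/-- The `h`-fold signed sumset of a finite subset `A` of an abelian group:
`h±A = {Σ λ_a • a : λ : A → ℤ, Σ |λ_a| = h}`. -/
def foldSignedSumset {G : Type*} [AddCommGroup G] (h : ℕ) (A : Finset G) : Set G :=
  {g | ∃ c : G → ℤ, (∑ a ∈ A, (c a).natAbs) = h ∧ (∑ a ∈ A, c a • a) = g}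

/-- `ρ(G, m, h) = min {|hA| : A ⊆ G, |A| = m}`. -/
noncomputable def rho (G : Type*) [AddCommGroup G] (m h : ℕ) : ℕ :=
  sInf {k | ∃ A : Finset G, A.card = m ∧ (foldSumset h A).ncard = k}

/-- `ρ±(G, m, h) = min {|h±A| : A ⊆ G, |A| = m}`. -/
noncomputable def rhoPM (G : Type*) [AddCommGroup G] (m h : ℕ) : ℕ :=
  sInf {k | ∃ A : Finset G, A.card = m ∧ (foldSignedSumset h A).ncard = k}

/-- `f_d(m, h) = (h⌈m/d⌉ - h + 1) d`. -/
def fdmh (d m h : ℕ) : ℕ := (h * ((m + d - 1) / d) - h + 1) * d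

/-- `u(n, m, h) = min {f_d(m, h) : d a positive divisor of n}`. -/
noncomputable def uFun (n m h : ℕ) : ℕ :=
  sInf {k | ∃ d : ℕ, 0 < d ∧ d ∣ n ∧ k = fdmh d m h}

/-!
Take `d = d₁ ⋯ d_r ∈ D(G, m)`. In `G = ∏ ℤ_{nᵢ}` the subgroup `H = ∏ ⟨nᵢ / dᵢ⟩` has order `d`,
and the last unit vector `g` has order `t = n_r / d_r` modulo `H`, so `ℤ_t` embeds in `G / H`.
The condition `d_r m ≤ d n_r` says `c = ⌈m / d⌉ ≤ t`, so `A` can be taken inside the union of the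
cosets `j g + H` for `j` in a set `J` of `c` residues mod `t`. Every element of `h±A` lies over a
sum of `h` elements of `J ∪ -J`; if all such sums lie in a set `V`, then `|h±A| ≤ |V| d`.
A suitable `V` of size at most `h (c - 1) + 1` exists: all of `ℤ_t` if `t ≤ h (c - 1) + 1`;
`V = J` for a symmetric `J` if `h = 1`; otherwise `J = {-(c-1), -(c-3), …, c-1}` and
`V = {-h(c-1), …, h(c-1)}` (step `2`), which works because then `2 (c - 1) < t`.
-/

section

variable {G G' K L : Type*} [AddCommGroup G] [AddCommGroup G'] [AddCommGroup K] [AddCommGroup L]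

theorem foldSignedSumset_map (e : G ≃+ G') (h : ℕ) (A : Finset G) :
    foldSignedSumset h (A.map e.toEquiv.toEmbedding) = e '' foldSignedSumset h A := by
  ext y
  constructor
  · rintro ⟨c, hc, rfl⟩
    refine ⟨∑ a ∈ A, c (e a) • a, ⟨c ∘ e, by simpa using hc, rfl⟩, ?_⟩
    simp [map_sum, map_zsmul]
  · rintro ⟨_, ⟨c, hc, rfl⟩, rfl⟩
    refine ⟨c ∘ e.symm, by simpa using hc, ?_⟩
    simp [map_sum, map_zsmul]

theorem rhoPM_congr (e : G ≃+ G') (m h : ℕ) : rhoPM G m h = rhoPM G' m h := by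
  unfold rhoPM
  congr 1
  ext k
  constructor
  · rintro ⟨A, rfl, rfl⟩
    refine ⟨A.map e.toEquiv.toEmbedding, card_map _, ?_⟩
    rw [foldSignedSumset_map, Set.ncard_image_of_injective _ e.injective]
  · rintro ⟨A, rfl, rfl⟩
    refine ⟨A.map e.symm.toEquiv.toEmbedding, card_map _, ?_⟩
    rw [foldSignedSumset_map, Set.ncard_image_of_injective _ e.symm.injective]

theorem exists_multiset_of_mem_foldSignedSumset {h : ℕ} {A : Finset G} {g : G}
    (hg : g ∈ foldSignedSumset h A) :
    ∃ l : Multiset G, Multiset.card l = h ∧ (∀ x ∈ l, x ∈ A ∨ -x ∈ A) ∧ l.sum = g := by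
  obtain ⟨c, hc, rfl⟩ := hg
  refine ⟨A.val.bind fun a => Multiset.replicate (c a).natAbs ((c a).sign • a), ?_, ?_, ?_⟩
  · simpa [Multiset.card_bind] using hc
  · intro x hx
    obtain ⟨a, ha, hx⟩ := Multiset.mem_bind.mp hx
    obtain ⟨hne, rfl⟩ := Multiset.mem_replicate.mp hx
    have ha : a ∈ A := ha
    rcases Int.sign_trichotomy (c a) with hs | hs | hs
    · simp [hs, ha]
    · simp [Int.sign_eq_zero_iff_zero.mp hs] at hne
    · simp [hs, ha]
  · simp only [Multiset.sum_bind, Multiset.sum_replicate, ← natCast_zsmul, smul_smul,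
      mul_comm _ (Int.sign _), Int.sign_mul_natAbs]
    rfl

/-- Stronger than `foldSignedSumset h J ⊆ V`: a signed sum in `G` may use several elements
of `A` lying over the same element of `J`. -/
def SignedSumsSubset (h : ℕ) (J V : Finset K) : Prop :=
  ∀ l : Multiset K, Multiset.card l = h → (∀ x ∈ l, x ∈ J ∨ -x ∈ J) → l.sum ∈ V

theorem SignedSumsSubset.image [DecidableEq L] {h : ℕ} {J V : Finset K}
    (hJV : SignedSumsSubset h J V) (f : K →+ L) :
    SignedSumsSubset h (J.image f) (V.image f) := by
  intro l hl hlJ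
  have hlift : ∀ x ∈ l, ∃ y, (y ∈ J ∨ -y ∈ J) ∧ f y = x := by
    intro x hx
    rcases hlJ x hx with hx | hx <;> obtain ⟨y, hy, hyx⟩ := mem_image.mp hx
    · exact ⟨y, .inl hy, hyx⟩
    · exact ⟨-y, .inr (by simpa using hy), by simp [hyx]⟩
  choose! g hgJ hgf using hlift
  have hl' : (l.map g).map f = l := by
    rw [Multiset.map_map]
    exact (Multiset.map_congr rfl hgf).trans (Multiset.map_id l)
  rw [← hl', ← map_multiset_sum]
  exact mem_image_of_mem f (hJV _ (by simpa using hl) (by simpa using hgJ))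

theorem signedSumsSubset_one {J : Finset K} (hJ : ∀ x ∈ J, -x ∈ J) : SignedSumsSubset 1 J J := by
  intro l hl hlJ
  obtain ⟨x, rfl⟩ := Multiset.card_eq_one.mp hl
  simpa using (hlJ x (Multiset.mem_singleton_self x)).elim id (fun hx => by simpa using hJ _ hx)

def symmProgression (p : ℕ) : Finset ℤ := (range (p + 1)).image fun i : ℕ => 2 * (i : ℤ) - p

theorem mem_symmProgression {p : ℕ} {x : ℤ} :
    x ∈ symmProgression p ↔ -p ≤ x ∧ x ≤ p ∧ 2 ∣ x + p := by
  simp only [symmProgression, mem_image, mem_range]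
  constructor
  · rintro ⟨i, hi, rfl⟩
    omega
  · rintro ⟨hlo, hhi, k, hk⟩
    exact ⟨k.toNat, by omega, by omega⟩

theorem card_symmProgression (p : ℕ) : #(symmProgression p) = p + 1 := by
  rw [symmProgression, card_image_of_injective _ (fun i j hij => by omega), card_range]

theorem Multiset.sum_mem_symmProgression {p : ℕ} (l : Multiset ℤ)
    (hl : ∀ x ∈ l, x ∈ symmProgression p) : l.sum ∈ symmProgression (Multiset.card l * p) := by
  induction l using Multiset.induction_on with
  | empty => simp [mem_symmProgression]
  | cons x l ih =>
    have hx := mem_symmProgression.mp (hl x (Multiset.mem_cons_self x l))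
    have hs := mem_symmProgression.mp (ih fun y hy => hl y (Multiset.mem_cons_of_mem hy))
    rw [Multiset.sum_cons, Multiset.card_cons, Nat.succ_mul, mem_symmProgression]
    push_cast at hs ⊢
    omega

theorem signedSumsSubset_symmProgression (h p : ℕ) :
    SignedSumsSubset h (symmProgression p) (symmProgression (h * p)) := by
  intro l hl hlJ
  rw [← hl]
  refine l.sum_mem_symmProgression fun x hx => (hlJ x hx).elim id fun hx => ?_
  have := mem_symmProgression.mp hx
  exact mem_symmProgression.mpr (by omega)

theorem QuotientAddGroup.ncard_preimage_mk (H : AddSubgroup G) (S : Set (G ⧸ H)) :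
    (QuotientAddGroup.mk ⁻¹' S : Set G).ncard = S.ncard * Nat.card H := by
  rw [← Nat.card_coe_set_eq, ← Nat.card_coe_set_eq,
    Nat.card_congr (QuotientAddGroup.preimageMkEquivAddSubgroupProdSet H S), Nat.card_prod,
    mul_comm]

theorem exists_card_eq_ncard_foldSignedSumset_le [Finite G] (H : AddSubgroup G)
    (ψ : K →+ G ⧸ H) (hψ : Function.Injective ψ) {h m : ℕ} {J V : Finset K}
    (hJV : SignedSumsSubset h J V) (hm : m ≤ #J * Nat.card H) :
    ∃ A : Finset G, #A = m ∧ (foldSignedSumset h A).ncard ≤ #V * Nat.card H := by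
  classical
  have hU := Set.toFinite (QuotientAddGroup.mk ⁻¹' (J.image ψ : Set (G ⧸ H)))
  have hUcard : #hU.toFinset = #J * Nat.card H := by
    rw [← Set.ncard_eq_toFinset_card _ hU, QuotientAddGroup.ncard_preimage_mk,
      Set.ncard_coe_finset, card_image_of_injective _ hψ]
  obtain ⟨A, hAU, rfl⟩ := exists_subset_card_eq (hm.trans hUcard.ge)
  refine ⟨A, rfl, ?_⟩
  have hsub : foldSignedSumset h A ⊆ QuotientAddGroup.mk ⁻¹' (V.image ψ : Set (G ⧸ H)) := by
    intro g hg
    obtain ⟨l, hl, hlA, rfl⟩ := exists_multiset_of_mem_foldSignedSumset hg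
    have hπ : ∀ x, x ∈ A → (x : G ⧸ H) ∈ J.image ψ := fun x hx => by simpa using hAU hx
    have hsum := map_multiset_sum (QuotientAddGroup.mk' H) l
    simp only [QuotientAddGroup.coe_mk'] at hsum
    rw [Set.mem_preimage, mem_coe, hsum]
    refine hJV.image ψ (l.map (↑)) (by rw [Multiset.card_map, hl]) ?_
    simp only [Multiset.mem_map]
    rintro _ ⟨x, hx, rfl⟩
    exact (hlA x hx).imp (hπ x) fun hx => by simpa using hπ _ hx
  calc (foldSignedSumset h A).ncard
      ≤ (QuotientAddGroup.mk ⁻¹' (V.image ψ : Set (G ⧸ H))).ncard :=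
        Set.ncard_le_ncard hsub (Set.toFinite _)
    _ = #(V.image ψ) * Nat.card H := by
      rw [QuotientAddGroup.ncard_preimage_mk, Set.ncard_coe_finset]
    _ ≤ #V * Nat.card H := Nat.mul_le_mul_right _ card_image_le

theorem card_image_intCast_zmod {t : ℕ} {a b : ℤ} (hab : b - a < t) {S : Finset ℤ}
    (hS : ∀ x ∈ S, a ≤ x ∧ x ≤ b) : #(S.image (Int.cast : ℤ → ZMod t)) = #S := by
  refine card_image_of_injOn fun x hx y hy hxy => ?_
  have hdvd := (ZMod.intCast_eq_intCast_iff_dvd_sub x y t).mp hxy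
  have hx := hS x hx
  have hy := hS y hy
  have := Int.eq_zero_of_abs_lt_dvd hdvd (abs_lt.mpr ⟨by omega, by omega⟩)
  omega

theorem exists_neg_mem_card_eq_zmod {t c : ℕ} (hct : c < t) :
    ∃ J : Finset (ZMod t), (∀ x ∈ J, -x ∈ J) ∧ #J = c := by
  obtain ⟨k, rfl | rfl⟩ := Nat.even_or_odd' c
  · refine ⟨((Icc (-k : ℤ) k).erase 0).image (↑), ?_, ?_⟩
    · simp only [mem_image, mem_erase, mem_Icc]
      rintro _ ⟨x, hx, rfl⟩
      exact ⟨-x, by omega, by push_cast; ring⟩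
    · rw [card_image_intCast_zmod (a := -k) (b := k) (by omega) (fun x hx => by
        simp only [mem_erase, mem_Icc] at hx; omega), card_erase_of_mem (by simp), Int.card_Icc]
      omega
  · refine ⟨(Icc (-k : ℤ) k).image (↑), ?_, ?_⟩
    · simp only [mem_image, mem_Icc]
      rintro _ ⟨x, hx, rfl⟩
      exact ⟨-x, by omega, by push_cast; ring⟩
    · rw [card_image_intCast_zmod (a := -k) (b := k) (by omega) (fun x hx => by
        simpa using hx), Int.card_Icc]
      omega

theorem exists_signedSumsSubset_zmod {t c h : ℕ} (hc : 0 < c) (hct : c ≤ t) (hh : 0 < h) :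
    ∃ J V : Finset (ZMod t), #J = c ∧ #V ≤ h * (c - 1) + 1 ∧ SignedSumsSubset h J V := by
  have : NeZero t := ⟨by omega⟩
  by_cases hsmall : t ≤ h * (c - 1) + 1
  · obtain ⟨J, -, hJ⟩ := exists_subset_card_eq (s := (univ : Finset (ZMod t))) (by simpa using hct)
    exact ⟨J, univ, hJ, by simpa using hsmall, fun l _ _ => mem_univ _⟩
  obtain rfl | h2 : h = 1 ∨ 2 ≤ h := by omega
  · obtain ⟨J, hJneg, hJ⟩ := exists_neg_mem_card_eq_zmod (t := t) (c := c) (by omega)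
    exact ⟨J, J, hJ, by omega, signedSumsSubset_one hJneg⟩
  · have hJV := (signedSumsSubset_symmProgression h (c - 1)).image (Int.castAddHom (ZMod t))
    simp only [Int.coe_castAddHom] at hJV
    refine ⟨_, _, ?_, card_image_le.trans (card_symmProgression _).le, hJV⟩
    rw [card_image_intCast_zmod (a := -(c - 1 : ℕ)) (b := (c - 1 : ℕ)) ?_
      (fun x hx => by have := mem_symmProgression.mp hx; omega), card_symmProgression]
    · omega
    · have : 2 * (c - 1) < t := by nlinarith
      omega

theorem ZMod.card_zmultiples_natCast_div {n d : ℕ} [NeZero n] (hd : d ∣ n) :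
    Nat.card (AddSubgroup.zmultiples ((n / d : ℕ) : ZMod n)) = d := by
  rw [Nat.card_zmultiples, ZMod.addOrderOf_coe _ (NeZero.ne n),
    Nat.gcd_eq_right (Nat.div_dvd_of_dvd hd), Nat.div_div_self hd (NeZero.ne n)]

theorem ZMod.intCast_mem_zmultiples_natCast_iff {n t : ℕ} (ht : t ∣ n) (z : ℤ) :
    (z : ZMod n) ∈ AddSubgroup.zmultiples (t : ZMod n) ↔ (t : ℤ) ∣ z := by
  constructor
  · rintro ⟨k, hk⟩
    simp only at hk
    rw [zsmul_eq_mul, ← Int.cast_natCast, ← Int.cast_mul,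
      ZMod.intCast_eq_intCast_iff_dvd_sub] at hk
    exact (dvd_sub_left (dvd_mul_left _ k)).mp ((Int.natCast_dvd_natCast.mpr ht).trans hk)
  · rintro ⟨k, rfl⟩
    exact ⟨k, by push_cast; ring⟩

theorem AddSubgroup.card_pi_univ {ι : Type*} [Fintype ι] {M : ι → Type*} [∀ i, AddGroup (M i)]
    (H : ∀ i, AddSubgroup (M i)) :
    Nat.card (AddSubgroup.pi Set.univ H) = ∏ i, Nat.card (H i) := by
  rw [← Nat.card_pi]
  exact Nat.card_congr ((Equiv.subtypeEquivRight fun x => by simp [AddSubgroup.mem_pi]).trans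
    Equiv.subtypePiEquivPi)

theorem exists_injective_zmod_quotient (H : AddSubgroup G) (g : G) {t : ℕ}
    (hg : ∀ z : ℤ, z • g ∈ H ↔ (t : ℤ) ∣ z) :
    ∃ ψ : ZMod t →+ G ⧸ H, Function.Injective ψ := by
  let f : ℤ →+ G ⧸ H := zmultiplesHom _ (g : G ⧸ H)
  have hf : ∀ z : ℤ, f z = 0 ↔ (t : ℤ) ∣ z := fun z => by
    simp [f, ← QuotientAddGroup.mk_zsmul, QuotientAddGroup.eq_zero_iff, hg]
  refine ⟨ZMod.lift t ⟨f, (hf t).mpr dvd_rfl⟩, (ZMod.lift_injective t).mpr fun z hz => ?_⟩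
  exact (ZMod.intCast_zmod_eq_zero_iff_dvd z t).mpr ((hf z).mp hz)

theorem exists_addSubgroup_pi_zmod {ι : Type*} [Fintype ι] (n d : ι → ℕ) [∀ i, NeZero (n i)]
    (hd : ∀ i, d i ∣ n i) (i₀ : ι) :
    ∃ H : AddSubgroup (∀ i, ZMod (n i)), Nat.card H = ∏ i, d i ∧
      ∃ ψ : ZMod (n i₀ / d i₀) →+ (∀ i, ZMod (n i)) ⧸ H, Function.Injective ψ := by
  classical
  refine ⟨AddSubgroup.pi Set.univ fun i => AddSubgroup.zmultiples ((n i / d i : ℕ) : ZMod (n i)),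
    ?_, ?_⟩
  · rw [AddSubgroup.card_pi_univ]
    exact prod_congr rfl fun i _ => ZMod.card_zmultiples_natCast_div (hd i)
  · refine exists_injective_zmod_quotient _ (Pi.single i₀ 1) fun z => ?_
    rw [← Pi.single_smul, AddSubgroup.single_mem_pi, zsmul_one]
    simpa using ZMod.intCast_mem_zmultiples_natCast_iff (Nat.div_dvd_of_dvd (hd i₀)) z

theorem fdmh_eq_ceilDiv (d m h : ℕ) : fdmh d m h = (h * (m ⌈/⌉ d - 1) + 1) * d := by
  rw [fdmh, Nat.mul_sub_one, Nat.ceilDiv_eq_add_pred_div]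

theorem rhoPM_pi_zmod_le_fdmh {ι : Type*} [Fintype ι] (n d : ι → ℕ) [∀ i, NeZero (n i)]
    (hd : ∀ i, d i ∣ n i) (i₀ : ι) {m h : ℕ} (hm : 0 < m) (hh : 0 < h)
    (hi₀ : d i₀ * m ≤ (∏ i, d i) * n i₀) :
    rhoPM (∀ i, ZMod (n i)) m h ≤ fdmh (∏ i, d i) m h := by
  obtain ⟨H, hH, ψ, hψ⟩ := exists_addSubgroup_pi_zmod n d hd i₀
  have hd_pos : ∀ i, 0 < d i := fun i => Nat.pos_of_dvd_of_pos (hd i) (NeZero.pos (n i))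
  have hD : 0 < ∏ i, d i := prod_pos fun i _ => hd_pos i
  have hmt : m ≤ (∏ i, d i) * (n i₀ / d i₀) := by
    refine Nat.le_of_mul_le_mul_left ?_ (hd_pos i₀)
    rwa [mul_left_comm, Nat.mul_div_cancel' (hd i₀)]
  have hc : 0 < m ⌈/⌉ ∏ i, d i := lt_of_not_ge fun h0 => by
    have := (ceilDiv_le_iff_le_mul hD).mp h0
    rw [Nat.mul_zero] at this
    omega
  obtain ⟨J, V, hJ, hV, hJV⟩ :=
    exists_signedSumsSubset_zmod hc ((ceilDiv_le_iff_le_mul hD).mpr hmt) hh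
  obtain ⟨A, rfl, hA⟩ := exists_card_eq_ncard_foldSignedSumset_le (m := m) H ψ hψ hJV
    (by rw [hJ, hH, mul_comm]; exact le_smul_ceilDiv hD)
  rw [fdmh_eq_ceilDiv]
  calc rhoPM _ #A h ≤ (foldSignedSumset h A).ncard := Nat.sInf_le ⟨A, rfl, rfl⟩
    _ ≤ #V * ∏ i, d i := hH ▸ hA
    _ ≤ _ := Nat.mul_le_mul_right _ hV

end

/-- `ρ±(G, m, h) ≤ min {f_d(m, h) : d ∈ D(G, m)}` for a group `G` of
type `(n_1, …, n_r)`. -/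
theorem rhoPM_le_min_fdmh_DGm (r : ℕ) (hr : 0 < r) (n : Fin r → ℕ)
    (G : Type*) [AddCommGroup G]
    (e : G ≃+ ((i : Fin r) → ZMod (n i)))
    (m h : ℕ) (hm : 0 < m) (hmn : m ≤ ∏ i, n i) (hh : 0 < h) :
    rhoPM G m h ≤
      sInf {k | ∃ d : ℕ, d ∣ ∏ i, n i ∧
        (∃ di : Fin r → ℕ, (∀ i, di i ∣ n i) ∧ d = ∏ i, di i ∧
          di ⟨r - 1, by omega⟩ * m ≤ d * n ⟨r - 1, by omega⟩) ∧
        k = fdmh d m h} := by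
  have : ∀ i, NeZero (n i) := fun i =>
    ⟨fun h0 => by simp [prod_eq_zero (mem_univ i) h0] at hmn; omega⟩
  rw [rhoPM_congr e]
  refine le_csInf ⟨_, _, dvd_rfl, ⟨n, fun i => dvd_rfl, rfl, ?_⟩, rfl⟩ ?_
  · rw [mul_comm]
    exact Nat.mul_le_mul_right _ hmn
  · rintro _ ⟨_, -, ⟨d, hd, rfl, hlast⟩, rfl⟩
    exact rhoPM_pi_zmod_le_fdmh n d hd _ hm hh hlast
end

section
/- Let G be a finite abelian group, let m ≤ |G| be a positive integer, and let h be a nonnegative integer. Then ρ±(G, m, h) = min{|h±A| : A ∈ 𝒜(G, m)}, where 𝒜(G, m) is the collection of m-subsets of G that are symmetric, near-symmetric, or asymmetric. In other words, the minimum size of an h-fold signed sumset over all m-subsets of G is always attained by an m-subset that is symmetric, near-symmetric, or asymmetric. -/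
open Finset Pointwise

lemma natAbs_sum_le' {α : Type*} (s : Finset α) (f : α → ℤ) :
    (∑ a ∈ s, f a).natAbs ≤ ∑ a ∈ s, (f a).natAbs := by
  classical
  induction s using Finset.cons_induction with
  | empty => simp
  | cons a s ha ih =>
    simp only [Finset.sum_cons]
    exact le_trans (Int.natAbs_add_le _ _) (by omega)

/-- Padding lemma: if `A` contains a symmetric pair, then a member of the `h`-fold
signed sumset is also a member of the `(h + 2k)`-fold signed sumset. -/
lemma pad_lemma {G : Type*} [AddCommGroup G] [DecidableEq G] {A : Finset G} {s : G}
    (hs : s ∈ A) (hs' : -s ∈ A) {h : ℕ} (k : ℕ) {g : G}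
    (hg : g ∈ foldSignedSumset h A) : g ∈ foldSignedSumset (h + 2 * k) A := by
  obtain ⟨c, hc1, hc2⟩ := hg
  by_cases hss : s = -s
  · -- 2-torsion case
    have h2 : s + s = 0 := by nth_rewrite 2 [hss]; exact add_neg_cancel s
    have hsmul0 : ((2 * (k : ℤ))) • s = 0 := by
      rw [mul_comm, mul_smul, two_zsmul, h2, smul_zero]
    have splitN : ∀ f : G → ℕ, ∑ a ∈ A, f a = f s + ∑ a ∈ A.erase s, f a := by
      intro f
      rw [Finset.add_sum_erase _ f hs]
    have splitG : ∀ f : G → G, ∑ a ∈ A, f a = f s + ∑ a ∈ A.erase s, f a := by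
      intro f
      rw [Finset.add_sum_erase _ f hs]
    rcases le_or_gt 0 (c s) with hv | hv
    · refine ⟨Function.update c s (c s + 2 * (k : ℤ)), ?_, ?_⟩
      · rw [splitN (fun a => ((Function.update c s (c s + 2 * (k : ℤ))) a).natAbs)]
        rw [splitN (fun a => (c a).natAbs)] at hc1
        rw [Finset.sum_congr rfl (fun a ha => by
          rw [Function.update_of_ne (Finset.ne_of_mem_erase ha)])]
        simp only [Function.update_self]
        omega
      · rw [splitG (fun a => (Function.update c s (c s + 2 * (k : ℤ))) a • a)]
        rw [splitG (fun a => c a • a)] at hc2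
        rw [Finset.sum_congr rfl (fun a ha => by
          rw [Function.update_of_ne (Finset.ne_of_mem_erase ha)])]
        simp only [Function.update_self]
        rw [add_zsmul, hsmul0, add_zero]
        exact hc2
    · refine ⟨Function.update c s (c s - 2 * (k : ℤ)), ?_, ?_⟩
      · rw [splitN (fun a => ((Function.update c s (c s - 2 * (k : ℤ))) a).natAbs)]
        rw [splitN (fun a => (c a).natAbs)] at hc1
        rw [Finset.sum_congr rfl (fun a ha => by
          rw [Function.update_of_ne (Finset.ne_of_mem_erase ha)])]
        simp only [Function.update_self]
        omega
      · rw [splitG (fun a => (Function.update c s (c s - 2 * (k : ℤ))) a • a)]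
        rw [splitG (fun a => c a • a)] at hc2
        rw [Finset.sum_congr rfl (fun a ha => by
          rw [Function.update_of_ne (Finset.ne_of_mem_erase ha)])]
        simp only [Function.update_self]
        rw [sub_zsmul, hsmul0, neg_zero, add_zero]
        exact hc2
  · -- s ≠ -s
    have hsin : s ∈ A.erase (-s) := Finset.mem_erase.mpr ⟨hss, hs⟩
    have splitN : ∀ f : G → ℕ, ∑ a ∈ A, f a = f (-s) + (f s + ∑ a ∈ (A.erase (-s)).erase s, f a) := by
      intro f
      rw [Finset.add_sum_erase _ f hsin, Finset.add_sum_erase _ f hs']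
    have splitG : ∀ f : G → G, ∑ a ∈ A, f a = f (-s) + (f s + ∑ a ∈ (A.erase (-s)).erase s, f a) := by
      intro f
      rw [Finset.add_sum_erase _ f hsin, Finset.add_sum_erase _ f hs']
    set u := c s with hu
    set w := c (-s) with hw
    set v : ℤ := u - w with hv
    set j : ℕ := (u.natAbs + w.natAbs - v.natAbs) / 2 with hjdef
    have hj : u.natAbs + w.natAbs = v.natAbs + 2 * j := by omega
    rcases le_or_gt 0 v with hvs | hvs
    · set c' : G → ℤ :=
        Function.update (Function.update c s (v + ((k : ℤ) + (j : ℤ)))) (-s) ((k : ℤ) + (j : ℤ))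
        with hc'
      have hval_s : c' s = v + ((k : ℤ) + (j : ℤ)) := by
        rw [hc', Function.update_of_ne hss, Function.update_self]
      have hval_ns : c' (-s) = (k : ℤ) + (j : ℤ) := by rw [hc', Function.update_self]
      have hval_rest : ∀ a ∈ (A.erase (-s)).erase s, c' a = c a := by
        intro a ha
        have h1 : a ≠ s := Finset.ne_of_mem_erase ha
        have h2 : a ≠ -s := Finset.ne_of_mem_erase (Finset.mem_of_mem_erase ha)
        rw [hc', Function.update_of_ne h2, Function.update_of_ne h1]
      refine ⟨c', ?_, ?_⟩
      · rw [splitN (fun a => (c' a).natAbs)]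
        rw [splitN (fun a => (c a).natAbs)] at hc1
        rw [Finset.sum_congr rfl (fun a ha => by rw [hval_rest a ha])]
        rw [hval_s, hval_ns]
        omega
      · rw [splitG (fun a => c' a • a)]
        rw [splitG (fun a => c a • a)] at hc2
        rw [Finset.sum_congr rfl (fun a ha => by rw [hval_rest a ha])]
        rw [hval_s, hval_ns, ← hc2, ← hu, ← hw]
        simp only [hv, zsmul_neg, add_zsmul, sub_zsmul, neg_zsmul]
        abel
    · set c' : G → ℤ :=
        Function.update (Function.update c s (v - ((k : ℤ) + (j : ℤ)))) (-s) (-((k : ℤ) + (j : ℤ)))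
        with hc'
      have hval_s : c' s = v - ((k : ℤ) + (j : ℤ)) := by
        rw [hc', Function.update_of_ne hss, Function.update_self]
      have hval_ns : c' (-s) = -((k : ℤ) + (j : ℤ)) := by rw [hc', Function.update_self]
      have hval_rest : ∀ a ∈ (A.erase (-s)).erase s, c' a = c a := by
        intro a ha
        have h1 : a ≠ s := Finset.ne_of_mem_erase ha
        have h2 : a ≠ -s := Finset.ne_of_mem_erase (Finset.mem_of_mem_erase ha)
        rw [hc', Function.update_of_ne h2, Function.update_of_ne h1]
      refine ⟨c', ?_, ?_⟩
      · rw [splitN (fun a => (c' a).natAbs)]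
        rw [splitN (fun a => (c a).natAbs)] at hc1
        rw [Finset.sum_congr rfl (fun a ha => by rw [hval_rest a ha])]
        rw [hval_s, hval_ns]
        omega
      · rw [splitG (fun a => c' a • a)]
        rw [splitG (fun a => c a • a)] at hc2
        rw [Finset.sum_congr rfl (fun a ha => by rw [hval_rest a ha])]
        rw [hval_s, hval_ns, ← hc2, ← hu, ← hw]
        simp only [hv, zsmul_neg, add_zsmul, sub_zsmul, neg_zsmul]
        abel

/-- If `A` contains a symmetric pair and every element of `B` is, up to sign, in `A`,
then `h±B ⊆ h±A`. -/
lemma fss_subset {G : Type*} [AddCommGroup G] [DecidableEq G] {A B : Finset G} {s : G}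
    (hs : s ∈ A) (hs' : -s ∈ A) (hBA : ∀ b ∈ B, b ∈ A ∨ -b ∈ A) (h : ℕ) :
    foldSignedSumset h B ⊆ foldSignedSumset h A := by
  intro g hg
  obtain ⟨c, hc1, hc2⟩ := hg
  set c' : G → ℤ := fun a => ∑ b ∈ B,
    (if b ∈ A then (if b = a then c b else 0) else (if -b = a then -c b else 0)) with hc'
  have hval : ∑ a ∈ A, c' a • a = g := by
    rw [hc']
    simp only [Finset.sum_smul]
    rw [Finset.sum_comm]
    rw [← hc2]
    refine Finset.sum_congr rfl (fun b hb => ?_)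
    by_cases hbA : b ∈ A
    · simp only [if_pos hbA]
      rw [Finset.sum_congr rfl (fun a _ => by
        show (if b = a then c b else 0) • a = (if b = a then c b • a else 0)
        split_ifs <;> simp)]
      rw [Finset.sum_ite_eq A b (fun a => c b • a), if_pos hbA]
    · have hnb : -b ∈ A := (hBA b hb).resolve_left hbA
      simp only [if_neg hbA]
      rw [Finset.sum_congr rfl (fun a _ => by
        show (if -b = a then -c b else 0) • a = (if -b = a then -c b • a else 0)
        split_ifs <;> simp)]
      rw [Finset.sum_ite_eq A (-b) (fun a => -c b • a), if_pos hnb]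
      rw [neg_zsmul, zsmul_neg, neg_neg]
  have hscal : ∑ a ∈ A, c' a = ∑ b ∈ B, (if b ∈ A then c b else -c b) := by
    rw [hc', Finset.sum_comm]
    refine Finset.sum_congr rfl (fun b hb => ?_)
    by_cases hbA : b ∈ A
    · simp only [if_pos hbA]
      rw [Finset.sum_ite_eq A b (fun _ => c b), if_pos hbA]
    · have hnb : -b ∈ A := (hBA b hb).resolve_left hbA
      simp only [if_neg hbA]
      rw [Finset.sum_ite_eq A (-b) (fun _ => -c b), if_pos hnb]
  have habs : ∑ a ∈ A, (c' a).natAbs ≤ h := by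
    calc ∑ a ∈ A, (c' a).natAbs
        ≤ ∑ a ∈ A, ∑ b ∈ B,
          (if b ∈ A then (if b = a then c b else 0) else (if -b = a then -c b else 0)).natAbs :=
          Finset.sum_le_sum (fun a _ => natAbs_sum_le' _ _)
      _ = ∑ b ∈ B, ∑ a ∈ A,
          (if b ∈ A then (if b = a then c b else 0) else (if -b = a then -c b else 0)).natAbs :=
          Finset.sum_comm
      _ = ∑ b ∈ B, (c b).natAbs := by
          refine Finset.sum_congr rfl (fun b hb => ?_)
          by_cases hbA : b ∈ A
          · simp only [if_pos hbA]
            rw [Finset.sum_congr rfl (fun a _ => apply_ite Int.natAbs (b = a) (c b) 0)]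
            simp only [Int.natAbs_zero]
            rw [Finset.sum_ite_eq A b (fun _ => (c b).natAbs), if_pos hbA]
          · have hnb : -b ∈ A := (hBA b hb).resolve_left hbA
            simp only [if_neg hbA]
            rw [Finset.sum_congr rfl (fun a _ => apply_ite Int.natAbs (-b = a) (-c b) 0)]
            simp only [Int.natAbs_zero]
            rw [Finset.sum_ite_eq A (-b) (fun _ => (-c b).natAbs), if_pos hnb, Int.natAbs_neg]
      _ = h := hc1
  have hpar : (2 : ℤ) ∣ (h : ℤ) - ((∑ a ∈ A, (c' a).natAbs : ℕ) : ℤ) := by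
    have e1 : ((h : ℤ)) = ∑ b ∈ B, ((c b).natAbs : ℤ) := by
      rw [← hc1]; push_cast; ring
    have e2 : ((∑ a ∈ A, (c' a).natAbs : ℕ) : ℤ) = ∑ a ∈ A, ((c' a).natAbs : ℤ) := by push_cast; ring
    have key : ∑ b ∈ B, ((c b).natAbs : ℤ) - ∑ a ∈ A, ((c' a).natAbs : ℤ)
        = (∑ b ∈ B, (((c b).natAbs : ℤ) - (if b ∈ A then c b else -c b)))
          + (∑ a ∈ A, (c' a - ((c' a).natAbs : ℤ))) := by
      rw [Finset.sum_sub_distrib, Finset.sum_sub_distrib, ← hscal]; ring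
    rw [e2, e1, key]
    refine dvd_add (Finset.dvd_sum (fun b _ => ?_)) (Finset.dvd_sum (fun a _ => ?_))
    · split_ifs <;> omega
    · omega
  obtain ⟨k, hk⟩ : ∃ k : ℕ, h = (∑ a ∈ A, (c' a).natAbs) + 2 * k := by
    obtain ⟨t, ht⟩ := hpar
    exact ⟨t.natAbs, by omega⟩
  have hpad := pad_lemma hs hs' k (g := g) ⟨c', rfl, hval⟩
  rwa [← hk] at hpad

/-- Any `m`-subset can be replaced by a symmetric, near-symmetric, or asymmetric
`m`-subset with a smaller (in fact, contained) signed sumset. -/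
lemma exists_good {G : Type*} [AddCommGroup G] [DecidableEq G] (h : ℕ) (A : Finset G) :
    ∃ A' : Finset G, A'.card = A.card ∧
      (A' = -A' ∨ (A' ≠ -A' ∧ ∃ a ∈ A', A'.erase a = -(A'.erase a)) ∨ A' ∩ -A' = ∅) ∧
      foldSignedSumset h A' ⊆ foldSignedSumset h A := by
  by_cases hS : A ∩ -A = ∅
  · exact ⟨A, rfl, Or.inr (Or.inr hS), subset_rfl⟩
  · obtain ⟨s, hsmem⟩ := Finset.nonempty_iff_ne_empty.mpr hS
    have hs : s ∈ A := (Finset.mem_inter.mp hsmem).1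
    have hs' : -s ∈ A := by
      have := (Finset.mem_inter.mp hsmem).2
      rwa [Finset.mem_neg'] at this
    have hT : ∀ x : G, x ∈ A \ -A ↔ x ∈ A ∧ -x ∉ A := by
      intro x; rw [Finset.mem_sdiff, Finset.mem_neg']
    obtain ⟨U, hUT, hUcard⟩ := Finset.exists_subset_card_eq
      (Nat.div_le_self (A \ -A).card 2)
    have hUmem : ∀ x ∈ U, x ∈ A ∧ -x ∉ A := fun x hx => (hT x).mp (hUT hx)
    set B : Finset G := (A ∩ -A) ∪ (U ∪ -U) with hBdef
    have hmemB : ∀ x : G, x ∈ B ↔ (x ∈ A ∧ -x ∈ A) ∨ x ∈ U ∨ -x ∈ U := by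
      intro x
      rw [hBdef]
      simp only [Finset.mem_union, Finset.mem_inter, Finset.mem_neg']
    have hBsym : B = -B := by
      ext x
      rw [hmemB x, Finset.mem_neg', hmemB (-x), neg_neg]
      tauto
    have hBsub : ∀ b ∈ B, b ∈ A ∨ -b ∈ A := by
      intro b hb
      rcases (hmemB b).mp hb with h1 | h1 | h1
      · exact Or.inl h1.1
      · exact Or.inl (hUmem b h1).1
      · exact Or.inr (hUmem (-b) h1).1
    have d1 : Disjoint U (-U) := by
      rw [Finset.disjoint_left]
      intro x hx hx'
      rw [Finset.mem_neg'] at hx'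
      exact (hUmem (-x) hx').2 (by rw [neg_neg]; exact (hUmem x hx).1)
    have d2 : Disjoint (A ∩ -A) (U ∪ -U) := by
      rw [Finset.disjoint_left]
      intro x hx hx'
      have hx2 := Finset.mem_inter.mp hx
      rw [Finset.mem_neg'] at hx2
      rcases Finset.mem_union.mp hx' with h1 | h1
      · exact (hUmem x h1).2 hx2.2
      · rw [Finset.mem_neg'] at h1
        exact (hUmem (-x) h1).2 (by rw [neg_neg]; exact hx2.1)
    have hBcard : B.card = (A ∩ -A).card + 2 * ((A \ -A).card / 2) := by
      rw [hBdef, Finset.card_union_of_disjoint d2, Finset.card_union_of_disjoint d1,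
        Finset.card_neg, hUcard]
      ring
    have hAcard : (A ∩ -A).card + (A \ -A).card = A.card :=
      Finset.card_inter_add_card_sdiff A (-A)
    by_cases hpar : (A \ -A).card % 2 = 0
    · refine ⟨B, by omega, Or.inl hBsym, fss_subset hs hs' hBsub h⟩
    · have hUlt : U.card < (A \ -A).card := by omega
      have hnsub : ¬ (A \ -A) ⊆ U := fun hsub => absurd (Finset.card_le_card hsub) (by omega)
      obtain ⟨t, htT, htU⟩ := Finset.not_subset.mp hnsub
      have htA : t ∈ A ∧ -t ∉ A := (hT t).mp htT
      have htB : t ∉ B := by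
        rw [hmemB]
        push_neg
        exact ⟨fun _ => htA.2, htU, fun h1 => htA.2 (hUmem (-t) h1).1⟩
      have hntB : -t ∉ B := by
        rw [hmemB]
        push_neg
        refine ⟨fun h1 => (htA.2 h1).elim, fun h1 => htA.2 (hUmem (-t) h1).1, ?_⟩
        rw [neg_neg]; exact htU
      have hnt_ne : -t ≠ t := fun h1 => htA.2 (h1.symm ▸ htA.1)
      refine ⟨insert t B, ?_, Or.inr (Or.inl ⟨?_, t, Finset.mem_insert_self t B, ?_⟩), ?_⟩
      · rw [Finset.card_insert_of_notMem htB]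
        omega
      · intro heq
        have : -t ∈ insert t B := by
          rw [heq, Finset.mem_neg', neg_neg]
          exact Finset.mem_insert_self t B
        rcases Finset.mem_insert.mp this with h1 | h1
        · exact hnt_ne h1
        · exact hntB h1
      · rw [Finset.erase_insert htB]
        exact hBsym
      · refine fss_subset hs hs' ?_ h
        intro b hb
        rcases Finset.mem_insert.mp hb with h1 | h1
        · exact Or.inl (h1 ▸ htA.1)
        · exact hBsub b h1

/-- the minimum of `|h±A|` over `m`-subsets of `G` is attained on a set
that is symmetric, near-symmetric, or asymmetric. -/
theorem rhoPM_eq_min_over_A (G : Type*) [AddCommGroup G] [Fintype G] [DecidableEq G]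
    (m h : ℕ) (hm : 0 < m) (hmn : m ≤ Fintype.card G) :
    rhoPM G m h =
      sInf {k | ∃ A : Finset G, A.card = m ∧
        (A = -A ∨
          (A ≠ -A ∧ ∃ a ∈ A, A.erase a = -(A.erase a)) ∨
          A ∩ -A = ∅) ∧
        (foldSignedSumset h A).ncard = k} := by
  set P := {k | ∃ A : Finset G, A.card = m ∧ (foldSignedSumset h A).ncard = k} with hP
  set Q := {k | ∃ A : Finset G, A.card = m ∧
        (A = -A ∨
          (A ≠ -A ∧ ∃ a ∈ A, A.erase a = -(A.erase a)) ∨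
          A ∩ -A = ∅) ∧
        (foldSignedSumset h A).ncard = k} with hQ
  have hPne : P.Nonempty := by
    obtain ⟨A, -, hAcard⟩ := Finset.exists_subset_card_eq (by simpa using hmn :
      m ≤ (Finset.univ : Finset G).card)
    exact ⟨(foldSignedSumset h A).ncard, A, hAcard, rfl⟩
  have hQne : Q.Nonempty := by
    obtain ⟨k, A, hAcard, -⟩ := hPne
    obtain ⟨A', hA'card, hA'fam, -⟩ := exists_good h A
    exact ⟨(foldSignedSumset h A').ncard, A', by omega, hA'fam, rfl⟩
  have hrho : rhoPM G m h = sInf P := rfl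
  rw [hrho]
  apply le_antisymm
  · obtain ⟨A, hAcard, -, hAk⟩ := Nat.sInf_mem hQne
    exact Nat.sInf_le ⟨A, hAcard, hAk⟩
  · obtain ⟨A, hAcard, hAk⟩ := Nat.sInf_mem hPne
    obtain ⟨A', hA'card, hA'fam, hA'sub⟩ := exists_good h A
    calc sInf Q ≤ (foldSignedSumset h A').ncard :=
          Nat.sInf_le ⟨A', by omega, hA'fam, rfl⟩
      _ ≤ (foldSignedSumset h A).ncard := Set.ncard_le_ncard hA'sub (Set.toFinite _)
      _ = sInf P := hAk
end

section
/- Let G be a finite abelian group, m ≥ 3, h ≥ 0, and let B be an m-subset of G whose degree of symmetry sdeg(B) = |B ∩ (−B)| satisfies 1 ≤ sdeg(B) ≤ m − 2. Then there exists an m-subset B' of G with sdeg(B') = sdeg(B) + 2 and h±B' ⊆ h±B (in particular |h±B'| ≤ |h±B|). -/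
open Finset Pointwise

lemma pad_aux {G : Type*} [AddCommGroup G] [DecidableEq G] (A : Finset G) (s : G)
    (hs : s ∈ A) (hns : -s ∈ A) (h t : ℕ) (g : G)
    (hg : g ∈ foldSignedSumset h A) : g ∈ foldSignedSumset (h + 2 * t) A := by
  obtain ⟨c, hc1, hc2⟩ := hg
  by_cases hss : s = -s
  · -- s is its own inverse
    have hs2 : s + s = 0 := by nth_rewrite 2 [hss]; exact add_neg_cancel s
    set u : ℤ := (t : ℤ) + (-(c s)).toNat with hu
    set c' : G → ℤ := fun a => if a = s then c s + 2 * u else c a with hcdef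
    have hcs : c' s = c s + 2 * u := by simp [hcdef]
    have hrest : ∀ a ∈ A.erase s, c' a = c a := fun a ha => by
      simp [hcdef, Finset.ne_of_mem_erase ha]
    refine ⟨c', ?_, ?_⟩
    · rw [← Finset.sum_erase_add A _ hs] at hc1 ⊢
      rw [Finset.sum_congr rfl (fun a ha => by rw [hrest a ha]), hcs]
      omega
    · rw [← Finset.sum_erase_add A _ hs] at hc2 ⊢
      rw [Finset.sum_congr rfl (fun a ha => by rw [hrest a ha]), hcs]
      set S := ∑ x ∈ A.erase s, c x • x with hS
      have key : (2 * u) • s = 0 := by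
        rw [two_mul, add_smul, ← smul_add, hs2, smul_zero]
      rw [add_smul, key, add_zero, hc2]
  · -- s ≠ -s
    have hns' : -s ∈ A.erase s := Finset.mem_erase.2 ⟨fun hh => hss hh.symm, hns⟩
    set u : ℤ := (t : ℤ) + (-(c s)).toNat + (-(c (-s))).toNat with hu
    set c' : G → ℤ := fun a => if a = s then c s + u else if a = -s then c (-s) + u else c a
      with hcdef
    have hcs : c' s = c s + u := by simp [hcdef]
    have hcns : c' (-s) = c (-s) + u := by
      simp [hcdef, Ne.symm hss]
    have hrest : ∀ a ∈ (A.erase s).erase (-s), c' a = c a := fun a ha => by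
      have h1 := Finset.ne_of_mem_erase ha
      have h2 := Finset.ne_of_mem_erase (Finset.mem_of_mem_erase ha)
      simp [hcdef, h1, h2]
    refine ⟨c', ?_, ?_⟩
    · rw [← Finset.sum_erase_add A _ hs, ← Finset.sum_erase_add _ _ hns'] at hc1 ⊢
      rw [Finset.sum_congr rfl (fun a ha => by rw [hrest a ha]), hcs, hcns]
      omega
    · rw [← Finset.sum_erase_add A _ hs, ← Finset.sum_erase_add _ _ hns'] at hc2 ⊢
      rw [Finset.sum_congr rfl (fun a ha => by rw [hrest a ha]), hcs, hcns]
      set S := ∑ x ∈ (A.erase s).erase (-s), c x • x with hS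
      rw [← hc2]
      generalize s = z at *
      simp only [add_smul, smul_neg]
      abel

/-- increasing the degree of symmetry by 2 without increasing the
signed sumset. -/
theorem exists_subset_sdeg_add_two (G : Type*) [AddCommGroup G] [Fintype G] [DecidableEq G]
    (m h : ℕ) (hm : 3 ≤ m) (B : Finset G) (hB : B.card = m)
    (h1 : 1 ≤ (B ∩ -B).card) (h2 : (B ∩ -B).card ≤ m - 2) :
    ∃ B' : Finset G, B'.card = m ∧ (B' ∩ -B').card = (B ∩ -B).card + 2 ∧
      foldSignedSumset h B' ⊆ foldSignedSumset h B ∧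
      (foldSignedSumset h B').ncard ≤ (foldSignedSumset h B).ncard := by
  -- a symmetric element s
  obtain ⟨s, hsmem⟩ := Finset.card_pos.mp (lt_of_lt_of_le Nat.zero_lt_one h1)
  have hsB : s ∈ B := (Finset.mem_inter.mp hsmem).1
  have hsnB : -s ∈ B := Finset.mem_neg'.mp (Finset.mem_inter.mp hsmem).2
  -- two distinct asymmetric elements
  have hcardsd : 1 < (B \ (-B)).card := by
    have := Finset.card_sdiff_add_card_inter B (-B)
    omega
  obtain ⟨b1, hb1m, b2, hb2m, hb12⟩ := Finset.one_lt_card.mp hcardsd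
  have hb1B : b1 ∈ B := (Finset.mem_sdiff.mp hb1m).1
  have hb2B : b2 ∈ B := (Finset.mem_sdiff.mp hb2m).1
  have hnb1B : -b1 ∉ B := fun hh => (Finset.mem_sdiff.mp hb1m).2 (Finset.mem_neg'.mpr hh)
  have hnb2B : -b2 ∉ B := fun hh => (Finset.mem_sdiff.mp hb2m).2 (Finset.mem_neg'.mpr hh)
  have hb1nb1 : b1 ≠ -b1 := fun hh => hnb1B (hh ▸ hb1B)
  -- s distinct from the b's
  have hsb1 : s ≠ b1 := fun hh => hnb1B (hh ▸ hsnB)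
  have hsb2 : s ≠ b2 := fun hh => hnb2B (hh ▸ hsnB)
  have hnsb1 : -s ≠ b1 := fun hh => hnb1B (by rw [← hh, neg_neg]; exact hsB)
  have hnsb2 : -s ≠ b2 := fun hh => hnb2B (by rw [← hh, neg_neg]; exact hsB)
  set B' : Finset G := insert (-b1) (B.erase b2) with hB'def
  have hnb1e : -b1 ∉ B.erase b2 := fun hh => hnb1B (Finset.mem_of_mem_erase hh)
  have hcardB' : B'.card = m := by
    rw [hB'def, Finset.card_insert_of_notMem hnb1e, Finset.card_erase_of_mem hb2B, hB]
    omega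
  -- intersection
  have hint : B' ∩ (-B') = insert b1 (insert (-b1) (B ∩ -B)) := by
    ext x
    simp only [Finset.mem_inter, Finset.mem_insert, Finset.mem_neg', Finset.mem_erase, hB'def]
    constructor
    · rintro ⟨hx1 | ⟨hxb2, hxB⟩, hx2 | ⟨hnxb2, hnxB⟩⟩
      · exact Or.inr (Or.inl hx1)
      · exact Or.inr (Or.inl hx1)
      · left; rw [← neg_neg x, hx2, neg_neg]
      · exact Or.inr (Or.inr ⟨hxB, hnxB⟩)
    · rintro (hx | hx | ⟨hxB, hnxB⟩)
      · subst hx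
        exact ⟨Or.inr ⟨hb12, hb1B⟩, Or.inl rfl⟩
      · subst hx
        refine ⟨Or.inl rfl, Or.inr ⟨?_, ?_⟩⟩ <;> rw [neg_neg]
        · exact hb12
        · exact hb1B
      · refine ⟨Or.inr ⟨?_, hxB⟩, Or.inr ⟨?_, hnxB⟩⟩
        · exact fun hh => hnb2B (hh ▸ hnxB)
        · exact fun hh => hnb2B (by rw [← hh, neg_neg]; exact hxB)
  have hcardint : (B' ∩ (-B')).card = (B ∩ -B).card + 2 := by
    rw [hint]
    rw [Finset.card_insert_of_notMem, Finset.card_insert_of_notMem]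
    · intro hh
      exact ((Finset.mem_sdiff.mp hb1m).2) (Finset.mem_neg'.mpr ((Finset.mem_inter.mp hh).1))
    · intro hh
      rcases Finset.mem_insert.mp hh with hh | hh
      · exact hb1nb1 hh
      · exact (Finset.mem_sdiff.mp hb1m).2 (Finset.mem_inter.mp hh).2
  have hsub : foldSignedSumset h B' ⊆ foldSignedSumset h B := by
    intro g hg
    obtain ⟨c, hc1, hc2⟩ := hg
    have hb1e : b1 ∈ B.erase b2 := Finset.mem_erase.2 ⟨hb12, hb1B⟩
    have hEe : insert b1 ((B.erase b2).erase b1) = B.erase b2 := Finset.insert_erase hb1e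
    set R := (B.erase b2).erase b1 with hR
    have hB'eq : B' = insert (-b1) (insert b1 R) := by rw [hB'def, hEe]
    have hBeq : B = insert b2 (insert b1 R) := by rw [hEe, Finset.insert_erase hb2B]
    have hb1R : b1 ∉ R := Finset.notMem_erase _ _
    have hnb1iR : -b1 ∉ insert b1 R := by
      intro hh
      rcases Finset.mem_insert.mp hh with hh | hh
      · exact hb1nb1 hh.symm
      · exact hnb1B (Finset.mem_of_mem_erase (Finset.mem_of_mem_erase hh))
    have hb2iR : b2 ∉ insert b1 R := by
      intro hh
      rcases Finset.mem_insert.mp hh with hh | hh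
      · exact hb12 hh.symm
      · exact (Finset.notMem_erase b2 B) (Finset.mem_of_mem_erase hh)
    rw [hB'eq, Finset.sum_insert hnb1iR, Finset.sum_insert hb1R] at hc1 hc2
    set x := c b1 with hx
    set y := c (-b1) with hy
    set c₀ : G → ℤ := fun a => if a = b1 then x - y else if a = b2 then 0 else c a with hc0
    have hc0b1 : c₀ b1 = x - y := by simp [hc0]
    have hc0b2 : c₀ b2 = 0 := by simp [hc0, Ne.symm hb12]
    have hc0R : ∀ a ∈ R, c₀ a = c a := fun a ha => by
      have ha1 := Finset.ne_of_mem_erase ha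
      have ha2 := Finset.ne_of_mem_erase (Finset.mem_of_mem_erase ha)
      simp [hc0, ha1, ha2]
    have hg' : g ∈ foldSignedSumset ((x - y).natAbs + ∑ a ∈ R, (c a).natAbs) B := by
      refine ⟨c₀, ?_, ?_⟩
      · rw [hBeq, Finset.sum_insert hb2iR, Finset.sum_insert hb1R,
          Finset.sum_congr rfl (fun a ha => by rw [hc0R a ha]), hc0b1, hc0b2]
        omega
      · rw [hBeq, Finset.sum_insert hb2iR, Finset.sum_insert hb1R,
          Finset.sum_congr rfl (fun a ha => by rw [hc0R a ha]), hc0b1, hc0b2, ← hc2]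
        set S := ∑ a ∈ R, c a • a with hS
        simp only [sub_smul, smul_neg, zero_smul, neg_smul]
        abel
    obtain ⟨t, ht⟩ : ∃ t, ((x - y).natAbs + ∑ a ∈ R, (c a).natAbs) + 2 * t = h :=
      ⟨(x.natAbs + y.natAbs - (x - y).natAbs) / 2, by omega⟩
    have hpad := pad_aux B s hsB hsnB _ t g hg'
    rwa [ht] at hpad
  exact ⟨B', hcardB', hcardint, hsub, Set.ncard_le_ncard hsub (Set.toFinite _)⟩
end

section
/- Let n, m, h be positive integers with m ≤ n, and let d be a positive divisor of n. Then there exists a symmetric subset R of the cyclic group ℤ_n (i.e., R = −R) with |R| ≥ m and |hR| ≤ f_d(m, h). -/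
open Finset Pointwise

/-! ### Auxiliary constructions -/

/-- The set of integers in `[-N, N]` congruent to `N` mod 2. -/
def iset (N : ℕ) : Finset ℤ := (Finset.range (N+1)).image (fun k : ℕ => (N : ℤ) - 2*(k : ℤ))

lemma mem_iset {N : ℕ} {x : ℤ} : x ∈ iset N ↔ ∃ k : ℕ, k ≤ N ∧ x = (N:ℤ) - 2*k := by
  simp only [iset, Finset.mem_image, Finset.mem_range, Nat.lt_succ_iff]
  constructor
  · rintro ⟨k, hk, rfl⟩; exact ⟨k, hk, rfl⟩
  · rintro ⟨k, hk, rfl⟩; exact ⟨k, hk, rfl⟩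

lemma neg_mem_iset {N : ℕ} {x : ℤ} (hx : x ∈ iset N) : -x ∈ iset N := by
  rw [mem_iset] at hx ⊢
  obtain ⟨k, hk, rfl⟩ := hx
  exact ⟨N - k, Nat.sub_le _ _, by omega⟩

lemma card_iset (N : ℕ) : (iset N).card = N + 1 := by
  rw [iset, Finset.card_image_of_injective _ (fun a b hab => by omega), Finset.card_range]

lemma card_iset_image (q N : ℕ) [NeZero q] (hq : 2*N + 1 ≤ q) :
    ((iset N).image (fun x : ℤ => (x : ZMod q))).card = N + 1 := by
  rw [Finset.card_image_of_injOn, card_iset]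
  intro x hx y hy hxy
  rw [Finset.mem_coe, mem_iset] at hx hy
  obtain ⟨k1, hk1, rfl⟩ := hx
  obtain ⟨k2, hk2, rfl⟩ := hy
  have h0 : ((((N:ℤ) - 2*k1) - ((N:ℤ) - 2*k2) : ℤ) : ZMod q) = 0 := by
    push_cast
    rw [sub_eq_zero]
    exact_mod_cast hxy
  rw [ZMod.intCast_zmod_eq_zero_iff_dvd] at h0
  have := Int.eq_zero_of_abs_lt_dvd h0 (by rw [abs_lt]; constructor <;> omega)
  omega

section Fibers

variable {n q d : ℕ}

lemma fiber_card [NeZero n] [NeZero q] (hdvd : q ∣ n) (hnqd : n = q * d) (s : ZMod q) :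
    (Finset.univ.filter (fun x : ZMod n => ZMod.castHom hdvd (ZMod q) x = s)).card = d := by
  have hq0 : 0 < q := Nat.pos_of_ne_zero (NeZero.ne q)
  have hfib : Finset.univ.filter (fun x : ZMod n => ZMod.castHom hdvd (ZMod q) x = s)
      = (Finset.range d).image (fun k => (s.val : ZMod n) + ((q * k : ℕ) : ZMod n)) := by
    ext x
    simp only [Finset.mem_filter, Finset.mem_univ, true_and, Finset.mem_image, Finset.mem_range]
    constructor
    · intro hx
      set y := x - (s.val : ZMod n) with hy
      have hπy : ZMod.castHom hdvd (ZMod q) y = 0 := by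
        rw [hy, map_sub, hx, map_natCast, ZMod.natCast_zmod_val, sub_self]
      have hvy : (y.val : ZMod q) = 0 := by
        rw [ZMod.natCast_val, ← ZMod.castHom_apply (h := hdvd), hπy]
      rw [ZMod.natCast_eq_zero_iff] at hvy
      obtain ⟨k, hk⟩ := hvy
      have hlt : y.val < n := ZMod.val_lt y
      refine ⟨k, ?_, ?_⟩
      · by_contra hge
        push_neg at hge
        have : q * d ≤ q * k := Nat.mul_le_mul_left q hge
        omega
      · rw [← hk, ZMod.natCast_zmod_val, hy]
        ring
    · rintro ⟨k, hk, rfl⟩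
      rw [map_add, map_natCast, ZMod.natCast_zmod_val, map_natCast]
      have : ((q * k : ℕ) : ZMod q) = 0 := by
        rw [ZMod.natCast_eq_zero_iff]
        exact Dvd.intro k rfl
      rw [this, add_zero]
  rw [hfib, Finset.card_image_of_injOn, Finset.card_range]
  intro k1 hk1 k2 hk2 heq
  simp only [Finset.coe_range, Set.mem_Iio] at hk1 hk2
  have h2 : ((q * k1 : ℕ) : ZMod n) = ((q * k2 : ℕ) : ZMod n) := by
    exact add_left_cancel heq
  rw [ZMod.natCast_eq_natCast_iff] at h2
  have hb1 : q * k1 < n := by rw [hnqd]; exact (Nat.mul_lt_mul_left hq0).mpr hk1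
  have hb2 : q * k2 < n := by rw [hnqd]; exact (Nat.mul_lt_mul_left hq0).mpr hk2
  have h3 : q * k1 % n = q * k2 % n := h2
  rw [Nat.mod_eq_of_lt hb1, Nat.mod_eq_of_lt hb2] at h3
  exact Nat.eq_of_mul_eq_mul_left hq0 h3

lemma filter_mem_card [NeZero n] [NeZero q] (hdvd : q ∣ n) (hnqd : n = q * d)
    (V : Finset (ZMod q)) :
    (Finset.univ.filter (fun x : ZMod n => ZMod.castHom hdvd (ZMod q) x ∈ V)).card
      = V.card * d := by
  calc (Finset.univ.filter (fun x : ZMod n => ZMod.castHom hdvd (ZMod q) x ∈ V)).card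
      = ∑ b ∈ V, ((Finset.univ.filter (fun x : ZMod n => ZMod.castHom hdvd (ZMod q) x ∈ V)).filter
          (fun x => ZMod.castHom hdvd (ZMod q) x = b)).card :=
        Finset.card_eq_sum_card_fiberwise (fun x hx => (Finset.mem_filter.mp hx).2)
    _ = ∑ b ∈ V, d := by
        refine Finset.sum_congr rfl (fun b hb => ?_)
        have heq : (Finset.univ.filter (fun x : ZMod n => ZMod.castHom hdvd (ZMod q) x ∈ V)).filter
            (fun x => ZMod.castHom hdvd (ZMod q) x = b)
            = Finset.univ.filter (fun x : ZMod n => ZMod.castHom hdvd (ZMod q) x = b) := by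
          ext x
          simp only [Finset.mem_filter, Finset.mem_univ, true_and]
          constructor
          · exact fun hx => hx.2
          · exact fun hx => ⟨hx ▸ hb, hx⟩
        rw [heq, fiber_card hdvd hnqd b]
    _ = V.card * d := by rw [Finset.sum_const, smul_eq_mul]

lemma filter_neg_eq [NeZero n] [NeZero q] (hdvd : q ∣ n) (V : Finset (ZMod q))
    (hV : ∀ x ∈ V, -x ∈ V) :
    Finset.univ.filter (fun x : ZMod n => ZMod.castHom hdvd (ZMod q) x ∈ V)
      = -(Finset.univ.filter (fun x : ZMod n => ZMod.castHom hdvd (ZMod q) x ∈ V)) := by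
  ext x
  simp only [Finset.mem_neg, Finset.mem_filter, Finset.mem_univ, true_and]
  constructor
  · intro hx
    exact ⟨-x, by rw [map_neg]; exact hV _ hx, neg_neg x⟩
  · rintro ⟨y, hy, rfl⟩
    rw [map_neg]
    exact hV _ hy

lemma foldSumset_one_subset {G : Type*} [AddCommGroup G] (A : Finset G) :
    foldSumset 1 A ⊆ ↑A := by
  classical
  rintro g ⟨c, hsum, hg⟩
  obtain ⟨a, ha, hca⟩ : ∃ a ∈ A, c a ≠ 0 := by
    by_contra hall
    push_neg at hall
    rw [Finset.sum_eq_zero hall] at hsum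
    exact absurd hsum (by omega)
  have hsplit : c a + ∑ b ∈ A.erase a, c b = 1 := by
    rw [Finset.add_sum_erase A c ha, hsum]
  have hca1 : c a = 1 := by omega
  have hS : ∑ b ∈ A.erase a, c b = 0 := by omega
  have hzero : ∀ b ∈ A.erase a, c b = 0 := (Finset.sum_eq_zero_iff).mp hS
  have hga : g = a := by
    rw [← hg, ← Finset.add_sum_erase A (fun x => c x • x) ha, hca1, one_smul,
      Finset.sum_eq_zero (fun b hb => by rw [hzero b hb, zero_smul]), add_zero]
  rw [hga]
  exact ha

lemma foldSumset_subset_filter [NeZero n] [NeZero q] (hdvd : q ∣ n) (h N : ℕ)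
    (R : Finset (ZMod n))
    (hR : ∀ a ∈ R, ZMod.castHom hdvd (ZMod q) a ∈ (iset N).image (fun x : ℤ => (x : ZMod q))) :
    foldSumset h R ⊆ ↑(Finset.univ.filter (fun x : ZMod n =>
      ZMod.castHom hdvd (ZMod q) x ∈ (iset (h*N)).image (fun x : ℤ => (x : ZMod q)))) := by
  rintro g ⟨cf, hsum, hg⟩
  rw [Finset.mem_coe, Finset.mem_filter]
  refine ⟨Finset.mem_univ g, ?_⟩
  have hex : ∀ a : ZMod n, ∃ k : ℕ, a ∈ R →
      (k ≤ N ∧ ((((N:ℤ) - 2*k : ℤ)) : ZMod q) = ZMod.castHom hdvd (ZMod q) a) := by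
    intro a
    by_cases ha : a ∈ R
    · obtain ⟨t, ht, hta⟩ := Finset.mem_image.mp (hR a ha)
      obtain ⟨k, hk, rfl⟩ := mem_iset.mp ht
      exact ⟨k, fun _ => ⟨hk, hta⟩⟩
    · exact ⟨0, fun h => absurd h ha⟩
  choose k hk using hex
  set K := ∑ a ∈ R, cf a * k a with hKdef
  have hKle : K ≤ h * N := by
    calc K ≤ ∑ a ∈ R, cf a * N :=
        Finset.sum_le_sum (fun a ha => Nat.mul_le_mul_left _ (hk a ha).1)
      _ = h * N := by rw [← Finset.sum_mul, hsum]
  refine Finset.mem_image.mpr ⟨((h*N : ℕ) : ℤ) - 2*(K:ℤ), mem_iset.mpr ⟨K, hKle, rfl⟩, ?_⟩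
  have hπg : ZMod.castHom hdvd (ZMod q) g = ∑ a ∈ R, cf a • ZMod.castHom hdvd (ZMod q) a := by
    rw [← hg, map_sum]
    exact Finset.sum_congr rfl (fun a _ => map_nsmul _ _ _)
  have hsZ : (∑ a ∈ R, (cf a : ℤ)) = (h : ℤ) := by
    rw [← Nat.cast_sum, hsum]
  have hKZ : (K : ℤ) = ∑ a ∈ R, (cf a : ℤ) * (k a : ℤ) := by
    rw [hKdef]
    push_cast
    rfl
  have h2 : (∑ a ∈ R, (cf a : ℤ) * ((N:ℤ) - 2*(k a))) = ((h*N : ℕ) : ℤ) - 2*(K:ℤ) := by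
    have expand : ∀ a ∈ R, (cf a : ℤ) * ((N:ℤ) - 2*(k a))
        = (cf a : ℤ)*(N:ℤ) - 2*((cf a : ℤ)*(k a : ℤ)) := fun a _ => by ring
    rw [Finset.sum_congr rfl expand, Finset.sum_sub_distrib, ← Finset.sum_mul, hsZ,
      ← Finset.mul_sum, ← hKZ]
    push_cast
    ring
  have h1 : ((∑ a ∈ R, (cf a : ℤ) * ((N:ℤ) - 2*(k a)) : ℤ) : ZMod q)
      = ∑ a ∈ R, cf a • ZMod.castHom hdvd (ZMod q) a := by
    rw [Int.cast_sum]
    refine Finset.sum_congr rfl (fun a ha => ?_)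
    rw [← (hk a ha).2]
    push_cast
    ring
  rw [hπg, ← h1, h2]

end Fibers

/-- for each positive divisor `d` of `n` there is a symmetric subset `R`
of `ℤ_n` with `|R| ≥ m` and `|hR| ≤ f_d(m, h)`. -/
theorem exists_symmetric_subset_small_sumset (n m h d : ℕ) (hn : 0 < n) (hm : 0 < m)
    (hh : 0 < h) (hmn : m ≤ n) (hd : 0 < d) (hdn : d ∣ n) :
    ∃ R : Finset (ZMod n), R = -R ∧ m ≤ R.card ∧
      (foldSumset h R).ncard ≤ fdmh d m h := by
  haveI : NeZero n := ⟨hn.ne'⟩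
  obtain ⟨q, hq⟩ := hdn
  have hq0 : 0 < q := by
    rcases Nat.eq_zero_or_pos q with h0 | h0
    · rw [h0, Nat.mul_zero] at hq; omega
    · exact h0
  haveI : NeZero q := ⟨hq0.ne'⟩
  have hdvd : q ∣ n := ⟨d, by rw [hq]; ring⟩
  have hnqd : n = q * d := by rw [hq]; ring
  obtain ⟨c, hc⟩ : ∃ c, (m + d - 1)/d = c := ⟨_, rfl⟩
  have hc1 : 1 ≤ c := by
    rw [← hc]
    exact (Nat.le_div_iff_mul_le hd).mpr (by omega)
  have hmcd : m ≤ c * d := by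
    have h1 := Nat.div_add_mod (m + d - 1) d
    have h2 := Nat.mod_lt (m + d - 1) hd
    rw [hc] at h1
    have h3 : d * c = c * d := Nat.mul_comm d c
    omega
  have hcq : c ≤ q := by
    have hlt : m + d - 1 < (q + 1) * d := by
      have : (q + 1) * d = q * d + d := by ring
      omega
    have := (Nat.div_lt_iff_lt_mul hd).mpr hlt
    rw [hc] at this
    omega
  have hfd : fdmh d m h = (h * (c-1) + 1) * d := by
    rw [fdmh, hc]
    congr 1
    obtain ⟨c', rfl⟩ : ∃ c', c = c' + 1 := ⟨c - 1, by omega⟩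
    simp only [Nat.mul_succ, Nat.add_sub_cancel]
  by_cases hcase1 : q ≤ h * (c-1) + 1
  · refine ⟨Finset.univ, Finset.neg_univ.symm, ?_, ?_⟩
    · rw [Finset.card_univ, ZMod.card]; exact hmn
    · have hub : (foldSumset h (Finset.univ : Finset (ZMod n))).ncard ≤ n := by
        have := Set.ncard_le_ncard (Set.subset_univ (foldSumset h Finset.univ)) (Set.finite_univ (α := ZMod n))
        rwa [Set.ncard_univ, Nat.card_eq_fintype_card, ZMod.card] at this
      refine hub.trans ?_
      rw [hfd, hnqd]
      exact Nat.mul_le_mul_right d hcase1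
  · push_neg at hcase1
    by_cases hcase2 : 2*c - 1 ≤ q
    · -- main construction
      refine ⟨Finset.univ.filter (fun x : ZMod n =>
        ZMod.castHom hdvd (ZMod q) x ∈ (iset (c-1)).image (fun t : ℤ => (t : ZMod q))), ?_, ?_, ?_⟩
      · refine filter_neg_eq hdvd _ (fun x hx => ?_)
        obtain ⟨t, ht, rfl⟩ := Finset.mem_image.mp hx
        exact Finset.mem_image.mpr ⟨-t, neg_mem_iset ht, by push_cast; ring⟩
      · rw [filter_mem_card hdvd hnqd, card_iset_image q (c-1) (by omega)]
        have : c - 1 + 1 = c := by omega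
        rw [this]
        exact hmcd
      · refine (Set.ncard_le_ncard
          (foldSumset_subset_filter hdvd h (c-1) _ (fun a ha => (Finset.mem_filter.mp ha).2))
          (Finset.finite_toSet _)).trans ?_
        rw [Set.ncard_coe_finset, filter_mem_card hdvd hnqd, hfd]
        refine Nat.mul_le_mul_right d ?_
        calc ((iset (h*(c-1))).image (fun t : ℤ => (t : ZMod q))).card
            ≤ (iset (h*(c-1))).card := Finset.card_image_le
          _ = h*(c-1) + 1 := card_iset _
    · push_neg at hcase2
      have hh1 : h = 1 := by
        by_contra hne
        have h2 : 2 ≤ h := by omega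
        have h3 : 2*(c-1) ≤ h*(c-1) := Nat.mul_le_mul_right _ h2
        omega
      subst hh1
      set e := q - c with he
      have he1 : 1 ≤ e := by omega
      set S := ((iset (e-1)).image (fun t : ℤ => (t : ZMod q)))ᶜ with hS
      have hcardS : S.card = c := by
        rw [hS, Finset.card_compl, card_iset_image q (e-1) (by omega), ZMod.card]
        omega
      refine ⟨Finset.univ.filter (fun x : ZMod n => ZMod.castHom hdvd (ZMod q) x ∈ S), ?_, ?_, ?_⟩
      · refine filter_neg_eq hdvd _ (fun x hx => ?_)
        rw [hS, Finset.mem_compl] at hx ⊢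
        intro hmem
        refine hx ?_
        obtain ⟨t, ht, hteq⟩ := Finset.mem_image.mp hmem
        refine Finset.mem_image.mpr ⟨-t, neg_mem_iset ht, ?_⟩
        rw [Int.cast_neg, hteq, neg_neg]
      · rw [filter_mem_card hdvd hnqd, hcardS]
        exact hmcd
      · have hsub := foldSumset_one_subset
          (Finset.univ.filter (fun x : ZMod n => ZMod.castHom hdvd (ZMod q) x ∈ S))
        have hle := Set.ncard_le_ncard hsub (Finset.finite_toSet _)
        rw [Set.ncard_coe_finset] at hle
        refine hle.trans ?_
        rw [filter_mem_card hdvd hnqd, hcardS, hfd]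
        refine Nat.mul_le_mul_right d ?_
        omega
end

section
/- Let G be a finite abelian group of type (n_1, …, n_r), i.e., G ≅ ℤ_{n_1} × ⋯ × ℤ_{n_r} with n_1 ≥ 2 and n_i dividing n_{i+1} for each i, and let n = n_1⋯n_r. For all positive integers m ≤ n and h, ρ±(G, m, h) ≤ u±(G, m, h), where u±(G, m, h) = min{Π_{i=1}^r u(n_i, m_i, h) : 1 ≤ m_i ≤ n_i for each i and Π_{i=1}^r m_i ≥ m}. -/
open Finset Pointwise

/-!
Choose `m_i` realising the minimum and, in each `ZMod n_i`, a set `A_i` of size `m_i` whose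
signed sumsets `h'±A_i`, for all `h' ≤ h` of the parity of `h`, lie in one set `S_i` of size at
most `u(n_i, m_i, h)`. Any `m`-subset `B` of `∏ A_i` then has `h±B ⊆ ∏ S_i`: projecting a signed
combination to a coordinate merges coefficients, which lowers the total weight by an even amount.

For `N = d q` and `c = ⌈m/d⌉`, take `A` inside `P + ⟨q⟩` with `P = {1-c, 3-c, …, c-1}`. Then
`h'±A ⊆ {-L, -L+2, …, L} + ⟨q⟩` with `L = h (c-1)`, a set of `(L+1) d = f_d(m, h)` elements.
This needs `P` to embed in `ZMod q`, i.e. `2 (c-1) < q`, which holds unless `N ≤ f_d(m, h)`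
(take `S = ZMod N`) or `h = 1` (take `A = -A`, so that `1±A = A`).
-/

section SignedSumsets

variable {G H : Type*} [AddCommGroup G] [AddCommGroup H]

/-- `⋃ {h'±A : h' ≤ h, h' ≡ h (mod 2)}`. Unlike `h±A`, this set survives pushing coefficients
forward along a homomorphism, where they may partially cancel. -/
def foldSignedSumsetLE (h : ℕ) (A : Finset G) : Set G :=
  {g | ∃ c : G → ℤ, ∑ a ∈ A, (c a).natAbs ≤ h ∧ ∑ a ∈ A, (c a).natAbs ≡ h [MOD 2] ∧
    ∑ a ∈ A, c a • a = g}

lemma foldSignedSumset_subset_foldSignedSumsetLE (h : ℕ) (A : Finset G) :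
    foldSignedSumset h A ⊆ foldSignedSumsetLE h A := by
  rintro g ⟨c, hc, rfl⟩
  exact ⟨c, hc.le, hc ▸ rfl, rfl⟩

lemma natCast_sum_natAbs_zmod_two {ι : Type*} (s : Finset ι) (f : ι → ℤ) :
    ((∑ i ∈ s, (f i).natAbs : ℕ) : ZMod 2) = ((∑ i ∈ s, f i : ℤ) : ZMod 2) := by
  push_cast [ZMod.natAbs_mod_two]
  rfl

lemma mapsTo_foldSignedSumsetLE (φ : G →+ H) {B : Finset G} {A : Finset H}
    (hBA : Set.MapsTo φ B A) (h : ℕ) :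
    Set.MapsTo φ (foldSignedSumsetLE h B) (foldSignedSumsetLE h A) := by
  classical
  rintro _ ⟨c, hc, hpar, rfl⟩
  set μ : H → ℤ := fun x => ∑ b ∈ B with φ b = x, c b
  have hμ_natAbs : ∑ x ∈ A, (μ x).natAbs ≤ ∑ b ∈ B, (c b).natAbs :=
    calc ∑ x ∈ A, (μ x).natAbs
        ≤ ∑ x ∈ A, ∑ b ∈ B with φ b = x, (c b).natAbs :=
          sum_le_sum fun x _ => Int.natAbs_sum_le _ _
      _ = ∑ b ∈ B, (c b).natAbs := sum_fiberwise_of_maps_to hBA _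
  have hμ_sum : ∑ x ∈ A, μ x = ∑ b ∈ B, c b := sum_fiberwise_of_maps_to hBA _
  refine ⟨μ, hμ_natAbs.trans hc, ?_, ?_⟩
  · rw [← ZMod.natCast_eq_natCast_iff] at hpar ⊢
    rw [natCast_sum_natAbs_zmod_two, hμ_sum, ← natCast_sum_natAbs_zmod_two, hpar]
  · rw [map_sum, ← sum_fiberwise_of_maps_to hBA]
    refine sum_congr rfl fun x _ => ?_
    rw [sum_smul]
    refine sum_congr rfl fun b hb => ?_
    rw [map_zsmul, (mem_filter.mp hb).2]

lemma foldSignedSumsetLE_image_subset [DecidableEq H] (φ : G →+ H) {B : Finset G}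
    (hφ : Set.InjOn φ B) (h : ℕ) :
    foldSignedSumsetLE h (B.image φ) ⊆ φ '' foldSignedSumsetLE h B := by
  rintro _ ⟨c, hc, hpar, rfl⟩
  rw [sum_image hφ] at hc hpar
  refine ⟨∑ b ∈ B, c (φ b) • b, ⟨c ∘ φ, hc, hpar, rfl⟩, ?_⟩
  rw [map_sum, sum_image hφ]
  simp only [map_zsmul]

lemma foldSignedSumsetLE_one_subset_of_neg_mem {A : Finset G} (hA : ∀ a ∈ A, -a ∈ A) :
    foldSignedSumsetLE 1 A ⊆ A := by
  classical
  rintro _ ⟨c, hc, hpar, rfl⟩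
  have hc1 : ∑ a ∈ A, (c a).natAbs = 1 := by
    have := Nat.ModEq.eq_of_lt_of_lt hpar (by omega) (by omega)
    omega
  obtain ⟨a₀, ha₀, hca₀⟩ : ∃ a₀ ∈ A, c a₀ ≠ 0 := by
    by_contra! hzero
    rw [sum_eq_zero fun a ha => by rw [hzero a ha]; rfl] at hc1
    exact zero_ne_one hc1
  have hrest : ∀ a ∈ A, a ≠ a₀ → c a = 0 := by
    have := add_sum_erase A (fun a => (c a).natAbs) ha₀
    intro a ha hne
    have hpos := Int.natAbs_pos.mpr hca₀
    have hle := single_le_sum (f := fun a => (c a).natAbs) (fun _ _ => Nat.zero_le _)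
      (mem_erase.mpr ⟨hne, ha⟩)
    omega
  rw [sum_eq_single_of_mem a₀ ha₀ fun a ha hne => by rw [hrest a ha hne, zero_smul]]
  have h1 : (c a₀).natAbs = 1 := by
    rwa [sum_eq_single_of_mem a₀ ha₀ fun a ha hne => by rw [hrest a ha hne]; rfl] at hc1
  rcases Int.natAbs_eq_iff.mp h1 with hpos | hneg
  · simpa [hpos] using ha₀
  · simpa [hneg] using hA a₀ ha₀

end SignedSumsets

lemma foldSignedSumsetLE_subset_piFinset {ι : Type*} [Fintype ι] [DecidableEq ι]
    {G : ι → Type*} [∀ i, AddCommGroup (G i)] [∀ i, DecidableEq (G i)]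
    {A S : ∀ i, Finset (G i)} {h : ℕ} (hAS : ∀ i, foldSignedSumsetLE h (A i) ⊆ S i)
    {B : Finset (∀ i, G i)} (hB : B ⊆ Fintype.piFinset A) :
    foldSignedSumsetLE h B ⊆ Fintype.piFinset S := fun _ hg =>
  Fintype.mem_piFinset.mpr fun i =>
    hAS i <| mapsTo_foldSignedSumsetLE (Pi.evalAddMonoidHom G i)
      (fun _ hb => Fintype.mem_piFinset.mp (hB hb) i) h hg

lemma rhoPM_le_card_of_foldSignedSumsetLE_subset {G : Type*} [AddCommGroup G]
    {A S : Finset G} {h : ℕ} (hAS : foldSignedSumsetLE h A ⊆ S) :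
    rhoPM G A.card h ≤ S.card :=
  calc rhoPM G A.card h ≤ (foldSignedSumset h A).ncard := Nat.sInf_le ⟨A, rfl, rfl⟩
    _ ≤ (S : Set G).ncard :=
        Set.ncard_le_ncard ((foldSignedSumset_subset_foldSignedSumsetLE h A).trans hAS)
          S.finite_toSet
    _ = S.card := Set.ncard_coe_finset S

def centeredProgression (L : ℕ) : Finset ℤ :=
  (range (L + 1)).image fun i : ℕ => 2 * (i : ℤ) - L

lemma mem_centeredProgression {L : ℕ} {z : ℤ} :
    z ∈ centeredProgression L ↔ |z| ≤ L ∧ z ≡ L [ZMOD 2] := by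
  simp only [centeredProgression, mem_image, mem_range, abs_le, Int.ModEq]
  constructor
  · rintro ⟨i, hi, rfl⟩
    omega
  · rintro ⟨⟨hlo, hhi⟩, hpar⟩
    exact ⟨((z + L) / 2).toNat, by omega, by omega⟩

lemma card_centeredProgression (L : ℕ) : (centeredProgression L).card = L + 1 := by
  rw [centeredProgression, card_image_of_injective _ fun i j hij => by simpa using hij,
    card_range]

lemma foldSignedSumsetLE_centeredProgression_subset (h L : ℕ) :
    foldSignedSumsetLE h (centeredProgression L) ⊆ centeredProgression (h * L) := by
  rintro _ ⟨c, hc, hpar, rfl⟩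
  simp only [smul_eq_mul]
  have hmem := fun p (hp : p ∈ centeredProgression L) => mem_centeredProgression.mp hp
  refine mem_centeredProgression.mpr ⟨?_, ?_⟩
  · calc |∑ p ∈ centeredProgression L, c p * p|
        ≤ ∑ p ∈ centeredProgression L, ((c p).natAbs : ℤ) * L := by
          refine (abs_sum_le_sum_abs _ _).trans (sum_le_sum fun p hp => ?_)
          rw [abs_mul, Int.natCast_natAbs]
          exact mul_le_mul_of_nonneg_left (hmem p hp).1 (abs_nonneg _)
      _ ≤ ((h * L : ℕ) : ℤ) := by
          rw [← sum_mul, Nat.cast_mul]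
          exact mul_le_mul_of_nonneg_right (by exact_mod_cast hc) (Nat.cast_nonneg L)
  · -- each `p` is `≡ L`, and the coefficients sum to `≡ h`, modulo 2
    rw [← ZMod.natCast_eq_natCast_iff] at hpar
    refine (ZMod.intCast_eq_intCast_iff _ _ 2).mp ?_
    calc ((∑ p ∈ centeredProgression L, c p * p : ℤ) : ZMod 2)
        = ∑ p ∈ centeredProgression L, (c p : ZMod 2) * L := by
          push_cast
          refine sum_congr rfl fun p hp => ?_
          rw [(ZMod.intCast_eq_intCast_iff _ _ 2).mpr (hmem p hp).2, Int.cast_natCast]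
      _ = ((h * L : ℕ) : ℤ) := by
          rw [← sum_mul, ← Int.cast_sum, ← natCast_sum_natAbs_zmod_two, hpar]
          push_cast
          rfl

/-- For `N = d q` this maps `[0, q) × [0, d)` bijectively onto `ZMod N`. -/
def mixedRadixHom (q N : ℕ) : ℤ × ℤ →+ ZMod N :=
  AddMonoidHom.mk' (fun p => ((p.1 + q * p.2 : ℤ) : ZMod N)) fun a b => by
    simp only [Prod.fst_add, Prod.snd_add]; push_cast; ring

lemma mixedRadixHom_apply (q N : ℕ) (p : ℤ × ℤ) :
    mixedRadixHom q N p = ((p.1 + q * p.2 : ℤ) : ZMod N) := rfl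

lemma mixedRadixHom_emod (d q : ℕ) (x y : ℤ) :
    mixedRadixHom q (d * q) (x, y % d) = mixedRadixHom q (d * q) (x, y) := by
  simp only [mixedRadixHom_apply]
  refine (ZMod.intCast_eq_intCast_iff _ _ _).mpr ?_
  rw [Nat.cast_mul, mul_comm]
  exact ((Int.mod_modEq y d).mul_left').add_left _

lemma injOn_mixedRadixHom {d q L : ℕ} (hLq : 2 * L < q) :
    Set.InjOn (mixedRadixHom q (d * q)) ↑(centeredProgression L ×ˢ Ico (0 : ℤ) d) := by
  rintro ⟨x, y⟩ hxy ⟨x', y'⟩ hxy' heq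
  simp only [mem_coe, mem_product, mem_Ico] at hxy hxy'
  have hdvd : (q : ℤ) * d ∣ (x' - x) + q * (y' - y) := by
    have := Int.modEq_iff_dvd.mp ((ZMod.intCast_eq_intCast_iff _ _ _).mp heq)
    rw [Nat.cast_mul, mul_comm] at this
    convert this using 1
    ring
  have hx : x' - x = 0 := by
    refine Int.eq_zero_of_abs_lt_dvd ((dvd_add_left (dvd_mul_right _ _)).mp
      ((dvd_mul_right _ _).trans hdvd)) ?_
    have hxL := (mem_centeredProgression.mp hxy.1).1
    have hxL' := (mem_centeredProgression.mp hxy'.1).1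
    rw [abs_le] at hxL hxL'
    rw [abs_lt]
    omega
  rw [hx, zero_add] at hdvd
  have hq : (q : ℤ) ≠ 0 := by omega
  have hy : y' - y = 0 :=
    Int.eq_zero_of_abs_lt_dvd ((mul_dvd_mul_iff_left hq).mp hdvd) (by rw [abs_lt]; omega)
  rw [Prod.mk.injEq]
  omega

lemma exists_foldSignedSumsetLE_subset_of_two_mul_lt {d q w m : ℕ} [NeZero d] (h : ℕ)
    (hm : m ≤ (w + 1) * d) (hwq : 2 * w < q) :
    ∃ A S : Finset (ZMod (d * q)), A.card = m ∧ S.card ≤ (h * w + 1) * d ∧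
      foldSignedSumsetLE h A ⊆ S := by
  set ψ := mixedRadixHom q (d * q)
  set K := Ico (0 : ℤ) d
  obtain ⟨B, hB, hBcard⟩ := exists_subset_card_eq (s := centeredProgression w ×ˢ K) (n := m)
    (by simpa [K, card_centeredProgression] using hm)
  have hψB : Set.InjOn ψ B := (injOn_mixedRadixHom hwq).mono (coe_subset.mpr hB)
  refine ⟨B.image ψ, (centeredProgression (h * w) ×ˢ K).image ψ,
    by rw [card_image_of_injOn hψB, hBcard],
    card_image_le.trans (by simp [K, card_centeredProgression]), ?_⟩
  refine (foldSignedSumsetLE_image_subset ψ hψB h).trans ?_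
  rintro _ ⟨g, hg, rfl⟩
  have hg₁ : g.1 ∈ centeredProgression (h * w) :=
    foldSignedSumsetLE_centeredProgression_subset h w <|
      mapsTo_foldSignedSumsetLE (AddMonoidHom.fst ℤ ℤ)
        (fun _ hp => (mem_product.mp (hB hp)).1) h hg
  rw [coe_image, ← mixedRadixHom_emod]
  have hd : (0 : ℤ) < d := by exact_mod_cast NeZero.pos d
  exact Set.mem_image_of_mem _ (mem_product.mpr ⟨hg₁,
    mem_Ico.mpr ⟨Int.emod_nonneg _ hd.ne', Int.emod_lt_of_pos _ hd⟩⟩)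

lemma exists_card_eq_forall_neg_mem {N m : ℕ} [NeZero N] (hmN : m ≤ N) :
    ∃ A : Finset (ZMod N), A.card = m ∧ ∀ a ∈ A, -a ∈ A := by
  rcases hmN.eq_or_lt with rfl | hlt
  · exact ⟨univ, by simp, fun a _ => mem_univ _⟩
  obtain ⟨t, ht⟩ := Nat.even_or_odd' m
  have hcast : ∀ J ⊆ Icc (-(t : ℤ)) t, (∀ x ∈ J, -x ∈ J) →
      ∃ A : Finset (ZMod N), A.card = J.card ∧ ∀ a ∈ A, -a ∈ A := by
    intro J hJ hneg
    have hinj : Set.InjOn (Int.cast : ℤ → ZMod N) J := by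
      intro x hx y hy hxy
      have hx := mem_Icc.mp (hJ hx)
      have hy := mem_Icc.mp (hJ hy)
      have := Int.eq_zero_of_abs_lt_dvd
        (Int.modEq_iff_dvd.mp ((ZMod.intCast_eq_intCast_iff _ _ _).mp hxy)) (by rw [abs_lt]; omega)
      omega
    refine ⟨J.image Int.cast, card_image_of_injOn hinj, ?_⟩
    simp only [mem_image]
    rintro _ ⟨x, hx, rfl⟩
    exact ⟨-x, hneg x hx, Int.cast_neg x⟩
  rcases ht with rfl | rfl
  · obtain ⟨A, hA, hneg⟩ := hcast ((Icc (-(t : ℤ)) t).erase 0) (erase_subset _ _) fun x hx => by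
      simp only [mem_erase, mem_Icc] at hx ⊢; omega
    refine ⟨A, ?_, hneg⟩
    rw [hA, card_erase_of_mem (by simp), Int.card_Icc]
    omega
  · obtain ⟨A, hA, hneg⟩ := hcast (Icc (-(t : ℤ)) t) subset_rfl fun x hx => by
      simp only [mem_Icc] at hx ⊢; omega
    refine ⟨A, ?_, hneg⟩
    rw [hA, Int.card_Icc]
    omega

lemma exists_foldSignedSumsetLE_subset_card_le_fdmh {N m h d : ℕ} [NeZero N] (hm : 0 < m)
    (hmN : m ≤ N) (hh : 0 < h) (hd : d ∣ N) :
    ∃ A S : Finset (ZMod N), A.card = m ∧ S.card ≤ fdmh d m h ∧ foldSignedSumsetLE h A ⊆ S := by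
  obtain ⟨q, rfl⟩ := hd
  have : NeZero d := ⟨left_ne_zero_of_mul (NeZero.ne (d * q))⟩
  -- `w + 1 = ⌈m / d⌉`
  set w := (m + d - 1) / d - 1 with hw
  have hfdmh : fdmh d m h = (h * w + 1) * d := by rw [fdmh, hw, Nat.mul_sub_one]
  have hmw : m ≤ (w + 1) * d := by
    have hc : 0 < (m + d - 1) / d := Nat.div_pos (by omega) (NeZero.pos d)
    have := Nat.div_add_mod (m + d - 1) d
    have := Nat.mod_lt (m + d - 1) (NeZero.pos d)
    rw [hw, Nat.sub_add_cancel hc, mul_comm]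
    omega
  by_cases htriv : d * q ≤ fdmh d m h
  · obtain ⟨A, -, hA⟩ := exists_subset_card_eq (s := (univ : Finset (ZMod (d * q)))) (n := m)
      (by simpa using hmN)
    exact ⟨A, univ, hA, by simpa using htriv, fun _ _ => mem_coe.mpr (mem_univ _)⟩
  rcases (Nat.one_le_iff_ne_zero.mpr hh.ne').eq_or_lt with rfl | hh2
  · obtain ⟨A, hA, hneg⟩ := exists_card_eq_forall_neg_mem hmN
    refine ⟨A, A, hA, by rw [hA, hfdmh, one_mul]; exact hmw,
      foldSignedSumsetLE_one_subset_of_neg_mem hneg⟩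
  · rw [hfdmh] at htriv ⊢
    have hq : h * w + 1 < q :=
      Nat.lt_of_mul_lt_mul_left (a := d) (by rw [mul_comm d (h * w + 1)]; omega)
    have hwq : 2 * w < q := by
      have := Nat.mul_le_mul_right w hh2
      omega
    exact exists_foldSignedSumsetLE_subset_of_two_mul_lt h hmw hwq

lemma exists_foldSignedSumsetLE_subset_card_le_uFun {N m h : ℕ} [NeZero N] (hm : 0 < m)
    (hmN : m ≤ N) (hh : 0 < h) :
    ∃ A S : Finset (ZMod N), A.card = m ∧ S.card ≤ uFun N m h ∧ foldSignedSumsetLE h A ⊆ S := by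
  obtain ⟨d, -, hd, hu⟩ := Nat.sInf_mem (⟨_, 1, one_pos, one_dvd N, rfl⟩ :
    {k | ∃ d : ℕ, 0 < d ∧ d ∣ N ∧ k = fdmh d m h}.Nonempty)
  rw [uFun, hu]
  exact exists_foldSignedSumsetLE_subset_card_le_fdmh hm hmN hh hd

theorem rhoPM_le_uPM_general (r : ℕ) (n : Fin r → ℕ)
    (G : Type*) [AddCommGroup G]
    (e : G ≃+ ((i : Fin r) → ZMod (n i)))
    (m h : ℕ) (hm : 0 < m) (hmn : m ≤ ∏ i, n i) (hh : 0 < h) :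
    rhoPM G m h ≤
      sInf {k | ∃ ms : Fin r → ℕ, (∀ i, 1 ≤ ms i ∧ ms i ≤ n i) ∧
        m ≤ ∏ i, ms i ∧ k = ∏ i, uFun (n i) (ms i) h} := by
  classical
  have hn : ∀ i, NeZero (n i) := fun i =>
    ⟨fun h0 => by simp [prod_eq_zero (mem_univ i) h0] at hmn; omega⟩
  obtain ⟨ms, hms, hmms, hk⟩ := Nat.sInf_mem
    (⟨_, n, fun i => ⟨(hn i).one_le, le_rfl⟩, hmn, rfl⟩ :
      {k | ∃ ms : Fin r → ℕ, (∀ i, 1 ≤ ms i ∧ ms i ≤ n i) ∧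
        m ≤ ∏ i, ms i ∧ k = ∏ i, uFun (n i) (ms i) h}.Nonempty)
  rw [hk]
  choose A S hA hS hAS using fun i =>
    exists_foldSignedSumsetLE_subset_card_le_uFun (hms i).1 (hms i).2 hh
  obtain ⟨B, hB, rfl⟩ := exists_subset_card_eq (s := Fintype.piFinset A) (n := m)
    (by simpa [hA] using hmms)
  have hBS : foldSignedSumsetLE h (B.image e.symm) ⊆ (Fintype.piFinset S).image e.symm := by
    refine (foldSignedSumsetLE_image_subset e.symm.toAddMonoidHom e.symm.injective.injOn h).trans
      ?_
    rw [coe_image]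
    exact Set.image_mono (foldSignedSumsetLE_subset_piFinset hAS hB)
  calc rhoPM G B.card h = rhoPM G (B.image e.symm).card h := by
        rw [card_image_of_injective _ e.symm.injective]
    _ ≤ ((Fintype.piFinset S).image e.symm).card :=
        rhoPM_le_card_of_foldSignedSumsetLE_subset hBS
    _ ≤ ∏ i, (S i).card := card_image_le.trans (Fintype.card_piFinset S).le
    _ ≤ ∏ i, uFun (n i) (ms i) h := prod_le_prod' fun i _ => hS i

/-- `ρ±(G, m, h) ≤ u±(G, m, h)` for a group `G` of type `(n_1, …, n_r)`. -/
theorem rhoPM_le_uPM (r : ℕ) (hr : 0 < r) (n : Fin r → ℕ)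
    (hn1 : 2 ≤ n ⟨0, hr⟩)
    (hchain : ∀ i : Fin r, ∀ hi : i.val + 1 < r, n i ∣ n ⟨i.val + 1, hi⟩)
    (G : Type*) [AddCommGroup G] [Fintype G]
    (e : G ≃+ ((i : Fin r) → ZMod (n i)))
    (m h : ℕ) (hm : 0 < m) (hmn : m ≤ ∏ i, n i) (hh : 0 < h) :
    rhoPM G m h ≤
      sInf {k | ∃ ms : Fin r → ℕ, (∀ i, 1 ≤ ms i ∧ ms i ≤ n i) ∧
        m ≤ ∏ i, ms i ∧ k = ∏ i, uFun (n i) (ms i) h} :=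
  rhoPM_le_uPM_general r n G e m h hm hmn hh
end

section
/- If G is a noncyclic finite abelian group of odd order n, then ρ±(G, (n−1)/2, 2) ≤ n − 1. -/
open Finset Pointwise

section Aux
variable {G : Type*} [AddCommGroup G] [Fintype G]

lemma neg_eq_self_imp (hodd : Odd (Fintype.card G)) {x : G} (hx : -x = x) : x = 0 := by
  have hxx : x + x = 0 := by nth_rewrite 1 [← hx]; exact neg_add_cancel x
  have h2 : 2 • x = 0 := by rw [two_nsmul]; exact hxx
  have hd : addOrderOf x ∣ 2 := addOrderOf_dvd_of_nsmul_eq_zero h2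
  have hc : addOrderOf x ∣ Fintype.card G := addOrderOf_dvd_card
  have h1 : addOrderOf x ∣ Nat.gcd 2 (Fintype.card G) := Nat.dvd_gcd hd hc
  have hcop : Nat.Coprime 2 (Fintype.card G) := Nat.coprime_two_left.mpr hodd
  rw [hcop] at h1
  exact AddMonoid.addOrderOf_eq_one_iff.mp (Nat.eq_one_of_dvd_one h1)

lemma exists_good_set (hodd : Odd (Fintype.card G)) :
    ∃ A : Finset G, A.card = (Fintype.card G - 1) / 2 ∧ (0 : G) ∉ A ∧ ∀ a ∈ A, -a ∉ A := by
  classical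
  let e := Fintype.equivFin G
  refine ⟨univ.filter (fun x => e x < e (-x)), ?_, ?_, ?_⟩
  · set A := univ.filter (fun x : G => e x < e (-x)) with hA
    set B := univ.filter (fun x : G => e (-x) < e x) with hB
    have hbij : A.card = B.card := by
      apply Finset.card_bij (fun a _ => -a)
      · intro a ha; simp only [hA, hB, mem_filter, mem_univ, true_and, neg_neg] at ha ⊢
        exact ha
      · intro a _ b _ h; exact neg_injective h
      · intro b hb; refine ⟨-b, ?_, by simp⟩
        simp only [hA, hB, mem_filter, mem_univ, true_and, neg_neg] at hb ⊢; exact hb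
    have hdisj : Disjoint A B := by
      rw [Finset.disjoint_left]
      intro x hx hy
      simp only [hA, hB, mem_filter, mem_univ, true_and] at hx hy
      exact absurd hy (not_lt.mpr hx.le)
    have hunion : A ∪ B = univ.filter (fun x : G => x ≠ 0) := by
      ext x
      simp only [hA, hB, mem_union, mem_filter, mem_univ, true_and]
      constructor
      · rintro (h | h) rfl <;> simp at h
      · intro hx
        rcases lt_or_gt_of_ne
          (fun h : e x = e (-x) => hx (neg_eq_self_imp hodd (e.injective h.symm))) with h | h
        · exact Or.inl h
        · exact Or.inr h
    have hcardu : (univ.filter (fun x : G => x ≠ 0)).card = Fintype.card G - 1 := by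
      rw [Finset.filter_ne', Finset.card_erase_of_mem (mem_univ 0), Finset.card_univ]
    have h2 : A.card + B.card = Fintype.card G - 1 := by
      rw [← Finset.card_union_of_disjoint hdisj, hunion, hcardu]
    have hn1 : Fintype.card G ≥ 1 := Fintype.card_pos
    omega
  · simp
  · intro a ha hna
    simp only [mem_filter, mem_univ, true_and, neg_neg] at ha hna
    exact absurd hna (not_lt.mpr ha.le)

lemma zero_not_mem_signed' (hodd : Odd (Fintype.card G)) (A : Finset G)
    (h0 : (0 : G) ∉ A) (hneg : ∀ a ∈ A, -a ∉ A) :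
    (0 : G) ∉ foldSignedSumset 2 A := by
  rintro ⟨c, hsum, hval⟩
  classical
  obtain ⟨a, haA, hca⟩ : ∃ a ∈ A, c a ≠ 0 := by
    by_contra h
    push_neg at h
    have : (∑ x ∈ A, (c x).natAbs) = 0 := Finset.sum_eq_zero (fun x hx => by rw [h x hx]; simp)
    omega
  have hsplit : (c a).natAbs + ∑ x ∈ A.erase a, (c x).natAbs = 2 :=
    (Finset.add_sum_erase A (fun x => (c x).natAbs) haA).trans hsum
  have hvsplit : c a • a + ∑ x ∈ A.erase a, c x • x = 0 :=
    (Finset.add_sum_erase A (fun x => c x • x) haA).trans hval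
  have h1 : (c a).natAbs = 1 ∨ (c a).natAbs = 2 := by
    have := Int.natAbs_pos.mpr hca; omega
  rcases h1 with h1 | h1
  · have hrest : ∑ x ∈ A.erase a, (c x).natAbs = 1 := by omega
    obtain ⟨b, hbA, hcb⟩ : ∃ b ∈ A.erase a, c b ≠ 0 := by
      by_contra h
      push_neg at h
      have : (∑ x ∈ A.erase a, (c x).natAbs) = 0 :=
        Finset.sum_eq_zero (fun x hx => by rw [h x hx]; simp)
      omega
    have hsplit2 : (c b).natAbs + ∑ x ∈ (A.erase a).erase b, (c x).natAbs = 1 :=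
      (Finset.add_sum_erase _ (fun x => (c x).natAbs) hbA).trans hrest
    have hcb1 : (c b).natAbs = 1 := by
      have := Int.natAbs_pos.mpr hcb; omega
    have hz : ∀ x ∈ (A.erase a).erase b, c x = 0 := by
      intro x hx
      by_contra hcx
      have hpos := Int.natAbs_pos.mpr hcx
      have hle : (c x).natAbs ≤ ∑ y ∈ (A.erase a).erase b, (c y).natAbs :=
        Finset.single_le_sum (f := fun y => (c y).natAbs) (fun y _ => Nat.zero_le _) hx
      omega
    have hrest0 : ∑ x ∈ (A.erase a).erase b, c x • x = 0 :=
      Finset.sum_eq_zero (fun x hx => by rw [hz x hx]; simp)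
    have hvsplit2 : c a • a + c b • b = 0 := by
      rw [← Finset.add_sum_erase _ (fun x => c x • x) hbA, hrest0, add_zero] at hvsplit
      exact hvsplit
    have hab : b ≠ a := (Finset.mem_erase.mp hbA).1
    have hbA' : b ∈ A := (Finset.mem_erase.mp hbA).2
    rcases Int.natAbs_eq_iff.mp h1 with ha1 | ha1 <;>
      rcases Int.natAbs_eq_iff.mp hcb1 with hb1 | hb1 <;>
      rw [ha1, hb1] at hvsplit2 <;>
      simp only [one_smul, neg_smul, Int.reduceNeg, Nat.cast_one] at hvsplit2
    · exact hneg a haA (eq_neg_of_add_eq_zero_right hvsplit2 ▸ hbA')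
    · exact hab (neg_injective (eq_neg_of_add_eq_zero_right hvsplit2))
    · have hb : b = a := by simpa using eq_neg_of_add_eq_zero_right hvsplit2
      exact hab hb
    · have hb : -b = a := by simpa using eq_neg_of_add_eq_zero_right hvsplit2
      exact hneg a haA ((neg_eq_iff_eq_neg.mp hb) ▸ hbA')
  · have hz : ∀ x ∈ A.erase a, c x = 0 := by
      intro x hx
      by_contra hcx
      have hpos := Int.natAbs_pos.mpr hcx
      have hle : (c x).natAbs ≤ ∑ y ∈ A.erase a, (c y).natAbs :=
        Finset.single_le_sum (f := fun y => (c y).natAbs) (fun y _ => Nat.zero_le _) hx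
      omega
    have hrest0 : ∑ x ∈ A.erase a, c x • x = 0 :=
      Finset.sum_eq_zero (fun x hx => by rw [hz x hx]; simp)
    rw [hrest0, add_zero] at hvsplit
    have haa : a + a = 0 := by
      rcases Int.natAbs_eq_iff.mp h1 with h | h <;> rw [h] at hvsplit
      · rw [show ((2:ℕ) : ℤ) • a = a + a by rw [Nat.cast_ofNat, two_zsmul]] at hvsplit
        exact hvsplit
      · have : ((2:ℕ) : ℤ) • a = 0 := by
          rw [show ((2:ℕ):ℤ) = -(-((2:ℕ):ℤ)) by ring, neg_smul, hvsplit, neg_zero]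
        rw [show ((2:ℕ) : ℤ) • a = a + a by rw [Nat.cast_ofNat, two_zsmul]] at this
        exact this
    exact h0 (neg_eq_self_imp hodd (neg_eq_of_add_eq_zero_left haa) ▸ haA)

end Aux

/-- for a noncyclic abelian group of odd order `n`,
`ρ±(G, (n-1)/2, 2) ≤ n - 1`. -/
theorem rhoPM_le_of_noncyclic_odd (G : Type*) [AddCommGroup G] [Fintype G]
    (hnc : ¬ IsAddCyclic G) (hodd : Odd (Fintype.card G)) :
    rhoPM G ((Fintype.card G - 1) / 2) 2 ≤ Fintype.card G - 1 := by
  obtain ⟨A, hcard, h0, hneg⟩ := exists_good_set hodd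
  have hmem : (foldSignedSumset 2 A).ncard ∈
      {k | ∃ B : Finset G, B.card = (Fintype.card G - 1) / 2 ∧ (foldSignedSumset 2 B).ncard = k} :=
    ⟨A, hcard, rfl⟩
  refine le_trans (Nat.sInf_le hmem) ?_
  have hsub : foldSignedSumset 2 A ⊆ {(0 : G)}ᶜ := by
    intro x hx
    simp only [Set.mem_compl_iff, Set.mem_singleton_iff]
    rintro rfl
    exact zero_not_mem_signed' hodd A h0 hneg hx
  have hle := Set.ncard_le_ncard hsub (Set.toFinite _)
  have hcompl : ({(0 : G)}ᶜ : Set G).ncard = Fintype.card G - 1 := by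
    have h1 := Set.ncard_add_ncard_compl ({(0 : G)} : Set G)
    have h2 : ({(0 : G)} : Set G).ncard = 1 := Set.ncard_singleton 0
    have h3 : Nat.card G = Fintype.card G := Nat.card_eq_fintype_card
    omega
  omega
end

section
/- If G is a noncyclic finite abelian group of odd order n and type (n_1, …, n_r), then u±(G, (n−1)/2, 2) = n, where u±(G, m, h) = min{Π_{i=1}^r u(n_i, m_i, h) : 1 ≤ m_i ≤ n_i for each i and Π_{i=1}^r m_i ≥ m}. -/
/-!
A minimiser of `f_d(m, 2)` over the divisors `d` of `n` has the form `(2p + 1) d`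
with `m ≤ (p + 1) d ≤ n`. For a competitor `(mᵢ)` put `P = ∏ (2pᵢ + 1)`,
`Q = ∏ (pᵢ + 1)` and `D = ∏ dᵢ`, so its value is `P D`, while `(N - 1)/2 ≤ Q D` and
`2Q ≤ P + 1`. Since `D ∣ N`, write `N = M D`; if `P D < N` then, all of `P`, `M`, `N`
being odd, `P ≤ M - 2`, so `N - 1 ≤ (P + 1) D ≤ N - D` and `D = 1`. Now
`2Q ≥ N - 1 ≥ P + 1`, which forces all but one `pᵢ` to vanish; then `2Q ≤ 2nᵢ < N - 1`
because there is a second factor `nⱼ ≥ 3`.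
-/

open Finset Pointwise

lemma exists_uFun_two_eq {n m : ℕ} (hn : 0 < n) (hm : m ≤ n) :
    ∃ d p : ℕ, d ∣ n ∧ m ≤ (p + 1) * d ∧ (p + 1) * d ≤ n ∧
      uFun n m 2 = (2 * p + 1) * d := by
  obtain ⟨d, hd, ⟨c, rfl⟩, hu⟩ :
      uFun n m 2 ∈ {k | ∃ d, 0 < d ∧ d ∣ n ∧ k = fdmh d m 2} :=
    Nat.sInf_mem ⟨_, 1, one_pos, one_dvd n, rfl⟩
  have hmq := Nat.lt_div_mul_add (a := m + d - 1) hd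
  set q := (m + d - 1) / d
  replace hmq : m ≤ q * d := by omega
  have hqc : q < c + 1 := (Nat.div_lt_iff_lt_mul hd).2 (by rw [Nat.succ_mul, mul_comm]; omega)
  have hc : 0 < c := Nat.pos_of_mul_pos_left hn
  refine ⟨d, q - 1, ⟨c, rfl⟩, ?_, ?_, ?_⟩
  · exact hmq.trans (Nat.mul_le_mul_right d (by omega))
  · rw [mul_comm d]; exact Nat.mul_le_mul_right d (by omega)
  · rw [hu, fdmh]; congr 1; omega

lemma uFun_two_self {n : ℕ} (hn : 0 < n) : uFun n n 2 = n := by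
  obtain ⟨d, p, -, hn_le, hle_n, hu⟩ := exists_uFun_two_eq hn le_rfl
  refine le_antisymm (Nat.sInf_le ⟨n, hn, dvd_rfl, ?_⟩) (hu ▸ by nlinarith)
  rw [fdmh, Nat.div_eq_of_lt_le (k := 1) (by omega) (by omega)]
  omega

lemma two_mul_prod_add_one_le {ι : Type*} (s : Finset ι) (p : ι → ℕ) :
    2 * ∏ i ∈ s, (p i + 1) ≤ ∏ i ∈ s, (2 * p i + 1) + 1 := by
  induction s using Finset.cons_induction with
  | empty => simp
  | cons a s ha ih =>
    rw [prod_cons, prod_cons]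
    have hpos : 0 < ∏ i ∈ s, (2 * p i + 1) := prod_pos fun i _ => by omega
    nlinarith

lemma two_mul_prod_add_one_lt {ι : Type*} [Fintype ι] {p : ι → ℕ} {i j : ι} (hij : i ≠ j)
    (hi : 0 < p i) (hj : 0 < p j) : 2 * ∏ k, (p k + 1) < ∏ k, (2 * p k + 1) := by
  classical
  rw [← mul_prod_erase univ _ (mem_univ i), ← mul_prod_erase univ _ (mem_univ i)]
  have hle := two_mul_prod_add_one_le (univ.erase i) p
  have hlt : ∏ k ∈ univ.erase i, (p k + 1) < ∏ k ∈ univ.erase i, (2 * p k + 1) :=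
    prod_lt_prod (fun _ _ => Nat.succ_pos _) (fun k _ => by omega)
      ⟨j, mem_erase.2 ⟨hij.symm, mem_univ j⟩, by omega⟩
  nlinarith

lemma prod_le_prod_two_mul_add_one {ι : Type*} [Fintype ι] [Nontrivial ι] {n p : ι → ℕ}
    (hn : ∀ i, 3 ≤ n i) (hp : ∀ i, p i + 1 ≤ n i)
    (hbig : ∏ i, n i ≤ 2 * ∏ i, (p i + 1) + 1) :
    ∏ i, n i ≤ ∏ i, (2 * p i + 1) := by
  by_cases htwo : ∃ i j, i ≠ j ∧ 0 < p i ∧ 0 < p j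
  · obtain ⟨i, j, hij, hi, hj⟩ := htwo
    exact hbig.trans (two_mul_prod_add_one_lt hij hi hj)
  push Not at htwo
  exfalso
  obtain ⟨i, hi⟩ : ∃ i, ∀ j ≠ i, p j = 0 := by
    by_cases hpos : ∃ i, 0 < p i
    · obtain ⟨i, hi⟩ := hpos
      exact ⟨i, fun j hji => by have := htwo i j hji.symm hi; omega⟩
    · push Not at hpos
      exact ⟨Classical.arbitrary ι, fun j _ => by have := hpos j; omega⟩
  obtain ⟨j, hji⟩ := exists_ne i
  have hQ : ∏ k, (p k + 1) = p i + 1 :=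
    prod_eq_single i (fun k _ hk => by simp [hi k hk]) (by simp)
  have hN : n i * n j ≤ ∏ k, n k := by
    classical
    rw [← prod_pair hji.symm]
    exact prod_le_prod_of_subset_of_one_le' (subset_univ _) fun k _ _ =>
      (by omega : 1 ≤ 3).trans (hn k)
  have h3ni : n i * 3 ≤ n i * n j := Nat.mul_le_mul_left (n i) (hn j)
  have := hn i
  have := hp i
  omega

lemma prod_le_prod_two_mul_add_one_mul {ι : Type*} [Fintype ι] [Nontrivial ι]
    {n d p : ι → ℕ} (hn : ∀ i, 2 ≤ n i) (hodd : Odd (∏ i, n i)) (hd : ∀ i, d i ∣ n i)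
    (hp : ∀ i, (p i + 1) * d i ≤ n i) (hbig : (∏ i, n i - 1) / 2 ≤ ∏ i, (p i + 1) * d i) :
    ∏ i, n i ≤ ∏ i, (2 * p i + 1) * d i := by
  simp only [prod_mul_distrib] at hbig ⊢
  replace hbig : ∏ i, n i ≤ 2 * ((∏ i, (p i + 1)) * ∏ i, d i) + 1 := by
    obtain ⟨c, hc⟩ := hodd
    omega
  obtain ⟨M, hM⟩ : ∏ i, d i ∣ ∏ i, n i := prod_dvd_prod_of_dvd _ _ fun i _ => hd i
  obtain ⟨hDo, hMo⟩ := Nat.odd_mul.1 (hM ▸ hodd)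
  have hPo : Odd (∏ i, (2 * p i + 1)) :=
    prod_induction _ Odd (fun _ _ => Odd.mul) odd_one fun i _ => odd_two_mul_add_one _
  have hn3 : ∀ i, 3 ≤ n i := fun i => by
    obtain ⟨k, hk⟩ := hodd.of_dvd_nat (dvd_prod_of_mem n (mem_univ i))
    have := hn i
    omega
  have hQP := two_mul_prod_add_one_le univ p
  by_contra! hlt
  rw [hM, mul_comm] at hlt
  have hPM : ∏ i, (2 * p i + 1) + 2 ≤ M := by
    have := Nat.lt_of_mul_lt_mul_left hlt
    obtain ⟨a, ha⟩ := hPo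
    obtain ⟨b, hb⟩ := hMo
    omega
  have hD : ∏ i, d i = 1 := by
    have := hDo.pos
    nlinarith [Nat.mul_le_mul_right (∏ i, d i) hQP, Nat.mul_le_mul_right (∏ i, d i) hPM]
  have hd1 : ∀ i, d i = 1 := fun i => Nat.dvd_one.1 (hD ▸ dvd_prod_of_mem d (mem_univ i))
  have := prod_le_prod_two_mul_add_one hn3 (fun i => by simpa [hd1] using hp i)
    (by simpa [hD] using hbig)
  rw [hD, one_mul] at hM
  omega

lemma prod_le_prod_uFun_two {ι : Type*} [Fintype ι] [Nontrivial ι] {n m : ι → ℕ}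
    (hn : ∀ i, 2 ≤ n i) (hodd : Odd (∏ i, n i)) (hm : ∀ i, m i ≤ n i)
    (hbig : (∏ i, n i - 1) / 2 ≤ ∏ i, m i) : ∏ i, n i ≤ ∏ i, uFun (n i) (m i) 2 := by
  choose d p hd hmp hpn hu using fun i => exists_uFun_two_eq (by have := hn i; omega) (hm i)
  simp only [hu]
  exact prod_le_prod_two_mul_add_one_mul hn hodd hd hpn
    (hbig.trans (prod_le_prod' fun i _ => hmp i))

lemma nontrivial_of_not_isAddCyclic {ι G : Type*} [AddGroup G] {n : ι → ℕ}
    (e : G ≃+ ((i : ι) → ZMod (n i))) (hG : ¬ IsAddCyclic G) : Nontrivial ι := by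
  by_contra hι
  rw [not_nontrivial_iff_subsingleton] at hι
  apply hG
  rw [e.isAddCyclic]
  cases isEmpty_or_nonempty ι with
  | inl _ => exact isAddCyclic_of_subsingleton
  | inr h =>
    obtain ⟨i⟩ := h
    have := uniqueOfSubsingleton i
    exact (AddEquiv.piUnique _).isAddCyclic.2 inferInstance

lemma Fin.zero_dvd_of_dvd_succ {r : ℕ} (n : Fin r → ℕ)
    (hchain : ∀ i : Fin r, ∀ hi : i.val + 1 < r, n i ∣ n ⟨i.val + 1, hi⟩) (hr : 0 < r)
    (i : Fin r) : n ⟨0, hr⟩ ∣ n i := by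
  obtain ⟨k, hk⟩ := i
  induction k with
  | zero => rfl
  | succ k ih => exact (ih (by omega)).trans (hchain ⟨k, by omega⟩ hk)

/-- for a noncyclic abelian group of odd order `n` and type
`(n_1, …, n_r)`, `u±(G, (n-1)/2, 2) = n`. -/
theorem uPM_eq_card_of_noncyclic_odd (r : ℕ) (hr : 0 < r) (n : Fin r → ℕ)
    (hn1 : 2 ≤ n ⟨0, hr⟩)
    (hchain : ∀ i : Fin r, ∀ hi : i.val + 1 < r, n i ∣ n ⟨i.val + 1, hi⟩)
    (G : Type*) [AddCommGroup G] [Fintype G]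
    (e : G ≃+ ((i : Fin r) → ZMod (n i)))
    (hnc : ¬ IsAddCyclic G) (hodd : Odd (Fintype.card G))
    (hcard : Fintype.card G = ∏ i, n i) :
    sInf {k | ∃ ms : Fin r → ℕ, (∀ i, 1 ≤ ms i ∧ ms i ≤ n i) ∧
        ((∏ i, n i) - 1) / 2 ≤ ∏ i, ms i ∧ k = ∏ i, uFun (n i) (ms i) 2} =
      ∏ i, n i := by
  have hNodd : Odd (∏ i, n i) := hcard ▸ hodd
  have hpos : ∀ i, 0 < n i := fun i => (hNodd.of_dvd_nat (dvd_prod_of_mem n (mem_univ i))).pos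
  have hn : ∀ i, 2 ≤ n i := fun i =>
    hn1.trans (Nat.le_of_dvd (hpos i) (Fin.zero_dvd_of_dvd_succ n hchain hr i))
  have : Nontrivial (Fin r) := nontrivial_of_not_isAddCyclic e hnc
  refine IsLeast.csInf_eq ⟨⟨n, fun i => ⟨hpos i, le_rfl⟩,
    (Nat.div_le_self _ _).trans (Nat.sub_le _ _), by simp only [uFun_two_self (hpos _)]⟩, ?_⟩
  rintro _ ⟨ms, hms, hbig, rfl⟩
  exact prod_le_prod_uFun_two hn hNodd (fun i => (hms i).2) hbig
end

section
/- Let G be a finite abelian group of order n, let m ≤ n be a positive integer, and suppose d is an odd divisor of n with d ≥ 2m + 1. Then ρ±(G, m, 2) ≤ d − 1. -/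
open Finset Pointwise

/-!
Take a subgroup `H` of order `d`. As `d` is odd, no nonzero element of `H` is its own negative,
so `H \ {0}` splits into `(d - 1) / 2 ≥ m` pairs `{x, -x}`, and we pick `A ⊆ H \ {0}` of size `m`
meeting each pair at most once. An element of `2±A` is `±2a` or `±a ± b` with `a ≠ b`, and it can
only vanish when `-a ∈ A`; hence `2±A ⊆ H \ {0}` and `|2±A| ≤ d - 1`.
-/

theorem AddCommGroup.exists_addSubgroup_card_eq_of_dvd {G : Type*} [AddCommGroup G] [Finite G]
    {d : ℕ} (hd : d ∣ Nat.card G) : ∃ H : AddSubgroup G, Nat.card H = d := by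
  induction d using Nat.strong_induction_on generalizing G with
  | _ d ih =>
  rcases eq_or_ne d 1 with rfl | hd1
  · exact ⟨⊥, AddSubgroup.card_bot⟩
  obtain ⟨p, hp, e, rfl⟩ := Nat.exists_prime_and_dvd hd1
  have : Fact p.Prime := ⟨hp⟩
  have he : 0 < e := Nat.pos_of_ne_zero fun he ↦ by simp [he, Nat.card_pos.ne'] at hd
  obtain ⟨x, hx⟩ := exists_prime_addOrderOf_dvd_card' p (dvd_of_mul_right_dvd hd)
  set Z := AddSubgroup.zmultiples x
  have hZ : Nat.card Z = p := by rw [Nat.card_zmultiples, hx]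
  have hcard : Nat.card G = p * Nat.card (G ⧸ Z) := by
    rw [Z.card_eq_card_quotient_mul_card_addSubgroup, hZ, mul_comm]
  obtain ⟨K, hK⟩ := ih e (lt_mul_left he hp.one_lt)
    (Nat.dvd_of_mul_dvd_mul_left hp.pos (hcard ▸ hd))
  refine ⟨K.comap (QuotientAddGroup.mk' Z), ?_⟩
  rw [← hK, ← hZ]
  exact (Nat.card_congr (QuotientAddGroup.preimageMkEquivAddSubgroupProdSet Z K)).trans
    (Nat.card_prod _ _)

theorem eq_zero_of_neg_eq_self_of_odd_natCard {G : Type*} [AddGroup G] (hG : Odd (Nat.card G))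
    {x : G} (hx : -x = x) : x = 0 :=
  (Nat.Coprime.nsmul_right_bijective (Nat.coprime_two_right.mpr hG)).injective <| by
    simp only [two_nsmul, nsmul_zero]
    nth_rw 1 [← hx]
    exact neg_add_cancel x

theorem Finset.exists_subset_card_eq_forall_neg_notMem {G : Type*} [InvolutiveNeg G]
    {S : Finset G} (hS : ∀ x ∈ S, -x ≠ x) {m : ℕ} (hm : 2 * m ≤ #S) :
    ∃ A ⊆ S, #A = m ∧ ∀ a ∈ A, -a ∉ A := by
  classical
  induction m generalizing S with
  | zero => exact ⟨∅, empty_subset S, rfl, by simp⟩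
  | succ m ih =>
    obtain ⟨x, hx⟩ : S.Nonempty := card_pos.mp (by omega)
    set S' := (S.erase x).erase (-x)
    have hS' : ∀ y, y ∈ S' ↔ y ≠ -x ∧ y ≠ x ∧ y ∈ S := by simp [S']
    have hS'S : S' ⊆ S := fun y hy ↦ ((hS' y).mp hy).2.2
    have hcard : 2 * m ≤ #S' := by
      have h₁ : #S - 1 ≤ #(S.erase x) := pred_card_le_card_erase
      have h₂ : #(S.erase x) - 1 ≤ #S' := pred_card_le_card_erase
      omega
    obtain ⟨A, hAS', hAcard, hA⟩ := ih (fun y hy ↦ hS y (hS'S hy)) hcard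
    have hxA : x ∉ A := fun h ↦ ((hS' x).mp (hAS' h)).2.1 rfl
    have hnxA : -x ∉ A := fun h ↦ ((hS' _).mp (hAS' h)).1 rfl
    refine ⟨insert x A, insert_subset hx (hAS'.trans hS'S), by rw [card_insert_of_notMem hxA,
      hAcard], ?_⟩
    simp only [mem_insert, forall_eq_or_imp, not_or]
    refine ⟨⟨hS x hx, hnxA⟩, fun a ha ↦ ⟨fun h ↦ hnxA ?_, hA a ha⟩⟩
    rwa [← h, neg_neg]

theorem foldSignedSumset_subset_addSubgroup {G : Type*} [AddCommGroup G] {H : AddSubgroup G}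
    {A : Finset G} (hA : (A : Set G) ⊆ H) (h : ℕ) : foldSignedSumset h A ⊆ H := by
  rintro _ ⟨c, -, rfl⟩
  exact H.sum_mem fun a ha ↦ H.zsmul_mem (hA ha) _

theorem Finset.sum_zsmul_eq_zero_of_sum_natAbs_eq_zero {G : Type*} [AddCommGroup G]
    {s : Finset G} {c : G → ℤ} (h : ∑ x ∈ s, (c x).natAbs = 0) : ∑ x ∈ s, c x • x = 0 :=
  sum_eq_zero fun x hx ↦ by rw [Int.natAbs_eq_zero.mp (sum_eq_zero_iff.mp h x hx), zero_zsmul]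

theorem zero_notMem_foldSignedSumset_two {G : Type*} [AddCommGroup G] {A : Finset G}
    (hA : ∀ a ∈ A, -a ∉ A) : (0 : G) ∉ foldSignedSumset 2 A := by
  classical
  rintro ⟨c, hc, hsum⟩
  obtain ⟨a, ha, hca⟩ := exists_ne_zero_of_sum_ne_zero (hc.symm ▸ two_ne_zero)
  rw [← add_sum_erase A _ ha] at hc hsum
  obtain hca₂ | hca₁ : (c a).natAbs = 2 ∨ (c a).natAbs = 1 := by omega
  · rw [sum_zsmul_eq_zero_of_sum_natAbs_eq_zero (by omega), add_zero] at hsum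
    rcases Int.natAbs_eq_iff.mp hca₂ with h | h <;>
      simp only [h, Nat.cast_ofNat, neg_zsmul, two_zsmul, neg_eq_zero,
        add_eq_zero_iff_eq_neg] at hsum <;>
      exact hA a ha (by rwa [← hsum])
  obtain ⟨b, hb, hcb⟩ := exists_ne_zero_of_sum_ne_zero (s := A.erase a)
    (f := fun x ↦ (c x).natAbs) (by omega)
  rw [← add_sum_erase _ _ hb] at hc hsum
  rw [sum_zsmul_eq_zero_of_sum_natAbs_eq_zero (by omega), add_zero] at hsum
  have hcb₁ : (c b).natAbs = 1 := by omega
  obtain ⟨hba, hbA⟩ := mem_erase.mp hb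
  rcases Int.natAbs_eq_iff.mp hca₁ with h | h <;> rcases Int.natAbs_eq_iff.mp hcb₁ with h' | h' <;>
    simp only [h, h', Nat.cast_one, one_zsmul, neg_zsmul, add_eq_zero_iff_eq_neg, neg_neg,
      neg_inj] at hsum
  exacts [hA b hbA (by rwa [← hsum]), hba hsum.symm, hba hsum.symm, hA a ha (by rwa [hsum])]

theorem rhoPM_le_of_odd_divisor_general (G : Type*) [AddCommGroup G] [Fintype G]
    (m d : ℕ) (hodd : Odd d) (hdvd : d ∣ Fintype.card G) (hdm : 2 * m + 1 ≤ d) :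
    rhoPM G m 2 ≤ d - 1 := by
  classical
  obtain ⟨H, hH⟩ := AddCommGroup.exists_addSubgroup_card_eq_of_dvd (G := G)
    (Nat.card_eq_fintype_card (α := G) ▸ hdvd)
  set S := (H : Set G).toFinset.erase 0
  have hScard : #S = d - 1 := by
    rw [card_erase_of_mem (by simp), Set.toFinset_card, ← Nat.card_eq_fintype_card]
    exact congrArg (· - 1) hH
  have hS : ∀ x ∈ S, -x ≠ x := by
    intro x hx hneg
    obtain ⟨hx0, hxH⟩ := mem_erase.mp hx
    have hx : (⟨x, by simpa using hxH⟩ : H) = 0 :=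
      eq_zero_of_neg_eq_self_of_odd_natCard (hH ▸ hodd) (Subtype.ext hneg)
    exact hx0 congr(Subtype.val $hx)
  obtain ⟨A, hAS, hAcard, hA⟩ := exists_subset_card_eq_forall_neg_notMem hS (m := m) (by omega)
  have hAH : (A : Set G) ⊆ H := fun a ha ↦ by simpa using (mem_erase.mp (hAS ha)).2
  have hsub : foldSignedSumset 2 A ⊆ S := fun g hg ↦ by
    simp only [coe_erase, Set.coe_toFinset, Set.mem_sdiff, Set.mem_singleton_iff, S]
    exact ⟨foldSignedSumset_subset_addSubgroup hAH 2 hg,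
      fun h ↦ zero_notMem_foldSignedSumset_two hA (h ▸ hg)⟩
  calc rhoPM G m 2 ≤ (foldSignedSumset 2 A).ncard := Nat.sInf_le ⟨A, hAcard, rfl⟩
    _ ≤ (S : Set G).ncard := Set.ncard_le_ncard hsub
    _ = d - 1 := by rw [Set.ncard_coe_finset, hScard]

/-- if `d` is an odd divisor of `|G|` with `d ≥ 2m + 1`, then
`ρ±(G, m, 2) ≤ d - 1`. -/
theorem rhoPM_le_of_odd_divisor (G : Type*) [AddCommGroup G] [Fintype G]
    (m d : ℕ) (hm : 0 < m) (hmn : m ≤ Fintype.card G)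
    (hodd : Odd d) (hdvd : d ∣ Fintype.card G) (hdm : 2 * m + 1 ≤ d) :
    rhoPM G m 2 ≤ d - 1 :=
  rhoPM_le_of_odd_divisor_general G m d hodd hdvd hdm
end

section
/- In the group ℤ_3 × ℤ_3, the minimum size of the 2-fold signed sumset over 4-element subsets is 8, while the minimum size of the 2-fold sumset over 4-element subsets is 7: ρ±(ℤ_3 × ℤ_3, 4, 2) = 8 and ρ(ℤ_3 × ℤ_3, 4, 2) = 7. -/
open Finset Pointwise

section Helpers
set_option linter.unusedSectionVars false
variable {G : Type*} [AddCommGroup G] [DecidableEq G]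

lemma sum_eq_one_aux {A : Finset G} {f : G → ℕ} (h : ∑ a ∈ A, f a = 1) :
    ∃ a ∈ A, f a = 1 ∧ ∀ b ∈ A, b ≠ a → f b = 0 := by
  classical
  induction A using Finset.induction_on with
  | empty => simp at h
  | @insert x s hx ih =>
    rw [Finset.sum_insert hx] at h
    rcases Nat.eq_zero_or_pos (f x) with h0 | h1
    · obtain ⟨a, ha, hfa, hrest⟩ := ih (by omega)
      refine ⟨a, Finset.mem_insert_of_mem ha, hfa, fun b hb hba => ?_⟩
      rcases Finset.mem_insert.mp hb with rfl | hb
      · exact h0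
      · exact hrest b hb hba
    · have hfx : f x = 1 := by omega
      have hs : ∑ a ∈ s, f a = 0 := by omega
      refine ⟨x, Finset.mem_insert_self _ _, hfx, fun b hb hbx => ?_⟩
      rcases Finset.mem_insert.mp hb with rfl | hb
      · exact absurd rfl hbx
      · exact (Finset.sum_eq_zero_iff).mp hs b hb

lemma sum_eq_two_aux {A : Finset G} {f : G → ℕ} (h : ∑ a ∈ A, f a = 2) :
    (∃ a ∈ A, f a = 2 ∧ ∀ b ∈ A, b ≠ a → f b = 0) ∨
    (∃ a ∈ A, ∃ b ∈ A, a ≠ b ∧ f a = 1 ∧ f b = 1 ∧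
      ∀ x ∈ A, x ≠ a → x ≠ b → f x = 0) := by
  classical
  induction A using Finset.induction_on with
  | empty => simp at h
  | @insert x s hx ih =>
    rw [Finset.sum_insert hx] at h
    rcases Nat.lt_or_ge (f x) 1 with h0 | h1
    · have h0 : f x = 0 := by omega
      rcases ih (by omega) with ⟨a, ha, hfa, hr⟩ | ⟨a, ha, b, hb, hab, hfa, hfb, hr⟩
      · refine Or.inl ⟨a, Finset.mem_insert_of_mem ha, hfa, fun b hb hba => ?_⟩
        rcases Finset.mem_insert.mp hb with rfl | hb
        · exact h0
        · exact hr b hb hba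
      · refine Or.inr ⟨a, Finset.mem_insert_of_mem ha, b, Finset.mem_insert_of_mem hb,
          hab, hfa, hfb, fun y hy hya hyb => ?_⟩
        rcases Finset.mem_insert.mp hy with rfl | hy
        · exact h0
        · exact hr y hy hya hyb
    · rcases Nat.lt_or_ge (f x) 2 with h2 | h2
      · have hfx : f x = 1 := by omega
        obtain ⟨a, ha, hfa, hr⟩ := sum_eq_one_aux (A := s) (f := f) (by omega)
        have hxa : x ≠ a := fun e => hx (e ▸ ha)
        refine Or.inr ⟨x, Finset.mem_insert_self _ _, a, Finset.mem_insert_of_mem ha,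
          hxa, hfx, hfa, fun y hy hyx hya => ?_⟩
        rcases Finset.mem_insert.mp hy with rfl | hy
        · exact absurd rfl hyx
        · exact hr y hy hya
      · have hfx : f x = 2 := by omega
        have hs : ∑ a ∈ s, f a = 0 := by omega
        refine Or.inl ⟨x, Finset.mem_insert_self _ _, hfx, fun b hb hbx => ?_⟩
        rcases Finset.mem_insert.mp hb with rfl | hb
        · exact absurd rfl hbx
        · exact (Finset.sum_eq_zero_iff).mp hs b hb

-- sum collapsing helpers
lemma sum_collapse_one {M : Type*} [AddCommMonoid M] {A : Finset G} {g : G → M}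
    {a : G} (ha : a ∈ A) (h0 : ∀ b ∈ A, b ≠ a → g b = 0) :
    ∑ x ∈ A, g x = g a := by
  rw [← Finset.sum_subset (Finset.singleton_subset_iff.mpr ha)
    (fun x hxA hxs => h0 x hxA (by simpa using hxs))]
  simp

lemma sum_collapse_two {M : Type*} [AddCommMonoid M] {A : Finset G} {g : G → M}
    {a b : G} (ha : a ∈ A) (hb : b ∈ A) (hab : a ≠ b)
    (h0 : ∀ x ∈ A, x ≠ a → x ≠ b → g x = 0) :
    ∑ x ∈ A, g x = g a + g b := by
  have hsub : ({a, b} : Finset G) ⊆ A := by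
    intro x hx; rcases Finset.mem_insert.mp hx with rfl | hx
    · exact ha
    · exact (Finset.mem_singleton.mp hx) ▸ hb
  rw [← Finset.sum_subset hsub (fun x hxA hxs => by
    simp only [Finset.mem_insert, Finset.mem_singleton, not_or] at hxs
    exact h0 x hxA hxs.1 hxs.2)]
  exact Finset.sum_pair hab

lemma mem_foldSumset_two {A : Finset G} {a b : G} (ha : a ∈ A) (hb : b ∈ A) :
    a + b ∈ foldSumset 2 A := by
  refine ⟨fun x => (if x = a then 1 else 0) + (if x = b then 1 else 0), ?_, ?_⟩
  · rw [Finset.sum_add_distrib, Finset.sum_ite_eq' A a (fun _ => 1),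
      Finset.sum_ite_eq' A b (fun _ => 1), if_pos ha, if_pos hb]
  · have : ∀ x : G, ((if x = a then 1 else 0) + (if x = b then 1 else 0)) • x
        = (if x = a then x else 0) + (if x = b then x else 0) := by
      intro x
      by_cases hxa : x = a <;> by_cases hxb : x = b <;> simp [hxa, hxb, add_smul]
    rw [Finset.sum_congr rfl (fun x _ => this x), Finset.sum_add_distrib,
      Finset.sum_ite_eq' A a (fun x => x), Finset.sum_ite_eq' A b (fun x => x),
      if_pos ha, if_pos hb]

lemma foldSumset_two (A : Finset G) : foldSumset 2 A = ↑(A + A) := by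
  ext g
  constructor
  · rintro ⟨c, hc, rfl⟩
    rcases sum_eq_two_aux hc with ⟨a, ha, hfa, hr⟩ | ⟨a, ha, b, hb, hab, hfa, hfb, hr⟩
    · have : ∑ x ∈ A, c x • x = a + a := by
        rw [sum_collapse_one ha (fun b hb hba => by rw [hr b hb hba, zero_smul]), hfa,
          two_nsmul]
      rw [this]
      exact_mod_cast Finset.add_mem_add ha ha
    · have : ∑ x ∈ A, c x • x = a + b := by
        rw [sum_collapse_two ha hb hab
          (fun x hxA hxa hxb => by rw [hr x hxA hxa hxb, zero_smul]), hfa, hfb,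
          one_smul, one_smul]
      rw [this]
      exact_mod_cast Finset.add_mem_add ha hb
  · intro hg
    obtain ⟨a, ha, b, hb, rfl⟩ := Finset.mem_add.mp (by exact_mod_cast hg)
    exact mem_foldSumset_two ha hb

lemma mem_foldSignedSumset_two {A : Finset G} {a b : G} (ha : a ∈ A) (hb : b ∈ A)
    {ε δ : ℤ} (hε : ε = 1 ∨ ε = -1) (hδ : δ = 1 ∨ δ = -1) (h : a ≠ b ∨ ε = δ) :
    ε • a + δ • b ∈ foldSignedSumset 2 A := by
  refine ⟨fun x => ε * (if x = a then 1 else 0) + δ * (if x = b then 1 else 0), ?_, ?_⟩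
  · have key : ∀ x : G, (ε * (if x = a then 1 else 0) + δ * (if x = b then 1 else 0)).natAbs
        = (if x = a then 1 else 0) + (if x = b then 1 else 0) := by
      intro x
      by_cases hxa : x = a
      · subst hxa
        by_cases hxb : x = b
        · subst hxb
          rcases h with h | rfl
          · exact absurd rfl h
          · rcases hε with rfl | rfl <;> simp
        · rcases hε with rfl | rfl <;> simp [hxb]
      · by_cases hxb : x = b
        · subst hxb
          rcases hδ with rfl | rfl <;> simp [hxa]
        · simp [hxa, hxb]
    rw [Finset.sum_congr rfl (fun x _ => key x), Finset.sum_add_distrib,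
      Finset.sum_ite_eq' A a (fun _ => 1), Finset.sum_ite_eq' A b (fun _ => 1),
      if_pos ha, if_pos hb]
  · have key : ∀ x : G, (ε * (if x = a then 1 else 0) + δ * (if x = b then 1 else 0)) • x
        = ε • (if x = a then x else 0) + δ • (if x = b then x else 0) := by
      intro x
      by_cases hxa : x = a <;> by_cases hxb : x = b <;>
        simp [hxa, hxb, add_smul, mul_smul]
    rw [Finset.sum_congr rfl (fun x _ => key x), Finset.sum_add_distrib,
      ← Finset.smul_sum, ← Finset.smul_sum,
      Finset.sum_ite_eq' A a (fun x => x), Finset.sum_ite_eq' A b (fun x => x),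
      if_pos ha, if_pos hb]

lemma foldSignedSumset_two (A : Finset G) :
    foldSignedSumset 2 A = ↑((A + A) ∪ ((-A) + (-A)) ∪ ((A - A).erase 0)) := by
  ext g
  simp only [Finset.coe_union, Set.mem_union, Finset.mem_coe, Finset.mem_erase]
  constructor
  · rintro ⟨c, hc, rfl⟩
    rcases sum_eq_two_aux hc with ⟨a, ha, hfa, hr⟩ | ⟨a, ha, b, hb, hab, hfa, hfb, hr⟩
    · have hsum : ∑ x ∈ A, c x • x = c a • a :=
        sum_collapse_one ha (fun b hb hba => by
          rw [Int.natAbs_eq_zero.mp (hr b hb hba), zero_smul])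
      have hca : c a = 2 ∨ c a = -2 := Int.natAbs_eq_iff.mp hfa
      rw [hsum]
      rcases hca with hca | hca <;> rw [hca]
      · left; left
        rw [show ((2:ℤ) • a) = a + a by rw [two_zsmul]]
        exact Finset.add_mem_add ha ha
      · left; right
        rw [show ((-2:ℤ) • a) = (-a) + (-a) by
          rw [show (-2:ℤ) = -(2:ℤ) by norm_num, neg_zsmul, two_zsmul, neg_add]]
        exact Finset.add_mem_add (Finset.neg_mem_neg ha) (Finset.neg_mem_neg ha)
    · have hsum : ∑ x ∈ A, c x • x = c a • a + c b • b :=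
        sum_collapse_two ha hb hab (fun x hxA hxa hxb => by
          rw [Int.natAbs_eq_zero.mp (hr x hxA hxa hxb), zero_smul])
      have hca : c a = 1 ∨ c a = -1 := Int.natAbs_eq_iff.mp hfa
      have hcb : c b = 1 ∨ c b = -1 := Int.natAbs_eq_iff.mp hfb
      rw [hsum]
      rcases hca with hca | hca <;> rcases hcb with hcb | hcb <;> rw [hca, hcb]
      · left; left
        rw [one_zsmul, one_zsmul]; exact Finset.add_mem_add ha hb
      · right
        rw [one_zsmul, neg_one_zsmul, ← sub_eq_add_neg]
        exact ⟨sub_ne_zero.mpr hab, Finset.sub_mem_sub ha hb⟩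
      · right
        rw [neg_one_zsmul, one_zsmul, neg_add_eq_sub]
        exact ⟨sub_ne_zero.mpr (Ne.symm hab), Finset.sub_mem_sub hb ha⟩
      · left; right
        rw [neg_one_zsmul, neg_one_zsmul]
        exact Finset.add_mem_add (Finset.neg_mem_neg ha) (Finset.neg_mem_neg hb)
  · rintro ((hg | hg) | ⟨hg0, hg⟩)
    · obtain ⟨a, ha, b, hb, rfl⟩ := Finset.mem_add.mp hg
      have := mem_foldSignedSumset_two ha hb (Or.inl rfl) (Or.inl rfl)
        (Or.inr rfl : a ≠ b ∨ (1:ℤ) = 1)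
      simpa using this
    · obtain ⟨a, ha, b, hb, rfl⟩ := Finset.mem_add.mp hg
      obtain ⟨a', ha', rfl⟩ := Finset.mem_neg.mp ha
      obtain ⟨b', hb', rfl⟩ := Finset.mem_neg.mp hb
      have := mem_foldSignedSumset_two ha' hb' (Or.inr rfl) (Or.inr rfl)
        (Or.inr rfl : a' ≠ b' ∨ (-1:ℤ) = -1)
      simpa using this
    · obtain ⟨a, ha, b, hb, rfl⟩ := Finset.mem_sub.mp hg
      have hab : a ≠ b := fun e => hg0 (by rw [e, sub_self])
      have := mem_foldSignedSumset_two ha hb (Or.inl rfl) (Or.inr rfl) (Or.inl hab)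
      simpa [sub_eq_add_neg] using this

end Helpers

set_option maxRecDepth 40000 in
lemma signed_lower_bound : ∀ A : Finset (ZMod 3 × ZMod 3), A.card = 4 →
    8 ≤ ((A + A) ∪ ((-A) + (-A)) ∪ ((A - A).erase 0)).card := by decide

set_option maxRecDepth 40000 in
lemma sumset_lower_bound : ∀ A : Finset (ZMod 3 × ZMod 3), A.card = 4 →
    7 ≤ (A + A).card := by decide

/-- `ρ±(ℤ_3 × ℤ_3, 4, 2) = 8` and `ρ(ℤ_3 × ℤ_3, 4, 2) = 7`. -/
theorem rhoPM_and_rho_Z3_Z3 :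
    rhoPM (ZMod 3 × ZMod 3) 4 2 = 8 ∧ rho (ZMod 3 × ZMod 3) 4 2 = 7 := by
  constructor
  · have hset : {k | ∃ A : Finset (ZMod 3 × ZMod 3), A.card = 4 ∧
        (foldSignedSumset 2 A).ncard = k}
        = {k | ∃ A : Finset (ZMod 3 × ZMod 3), A.card = 4 ∧
            ((A + A) ∪ ((-A) + (-A)) ∪ ((A - A).erase 0)).card = k} := by
      ext k
      simp only [Set.mem_setOf_eq, foldSignedSumset_two, Set.ncard_coe_finset]
    rw [rhoPM, hset]
    apply le_antisymm
    · exact Nat.sInf_le ⟨({(0,1),(1,0),(1,1),(1,2)} : Finset (ZMod 3 × ZMod 3)),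
        by decide, by decide⟩
    · refine le_csInf ⟨8, ({(0,1),(1,0),(1,1),(1,2)} : Finset (ZMod 3 × ZMod 3)),
        by decide, by decide⟩ ?_
      rintro k ⟨A, hA, rfl⟩
      exact signed_lower_bound A hA
  · have hset : {k | ∃ A : Finset (ZMod 3 × ZMod 3), A.card = 4 ∧
        (foldSumset 2 A).ncard = k}
        = {k | ∃ A : Finset (ZMod 3 × ZMod 3), A.card = 4 ∧ (A + A).card = k} := by
      ext k
      simp only [Set.mem_setOf_eq, foldSumset_two, Set.ncard_coe_finset]
    rw [rho, hset]
    apply le_antisymm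
    · exact Nat.sInf_le ⟨({(0,0),(0,1),(0,2),(1,0)} : Finset (ZMod 3 × ZMod 3)),
        by decide, by decide⟩
    · refine le_csInf ⟨7, ({(0,0),(0,1),(0,2),(1,0)} : Finset (ZMod 3 × ZMod 3)),
        by decide, by decide⟩ ?_
      rintro k ⟨A, hA, rfl⟩
      exact sumset_lower_bound A hA
end

section
/- Let A be a 4-element subset of ℤ_3 × ℤ_3. If A is asymmetric (A ∩ (−A) = ∅), then 2±A = (ℤ_3 × ℤ_3) ∖ {0}; otherwise 2±A = ℤ_3 × ℤ_3. -/
open Finset Pointwise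

/-! ### Auxiliary material -/

section Aux

abbrev G3 := ZMod 3 × ZMod 3

lemma G3add3 : ∀ x : G3, x + x + x = 0 := by decide

lemma G3add2 : ∀ x : G3, x + x = -x := fun x => eq_neg_of_add_eq_zero_left (G3add3 x)

lemma G3tri : ∀ k : ZMod 3, k = 0 ∨ k = 1 ∨ k = 2 := by decide

lemma mem_neg_iff (s : Finset G3) (a : G3) : a ∈ -s ↔ -a ∈ s := by
  rw [Finset.mem_neg]
  constructor
  · rintro ⟨y, hy, rfl⟩; rwa [neg_neg]
  · intro h; exact ⟨-a, h, neg_neg a⟩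

/-- Signed-sumset membership for a "double" term. -/
lemma fss_single {G : Type*} [AddCommGroup G] [DecidableEq G] {A : Finset G} {a : G}
    (ha : a ∈ A) (e : ℤ) (he : e.natAbs = 2) : e • a ∈ foldSignedSumset 2 A := by
  refine ⟨fun x => if x = a then e else 0, ?_, ?_⟩
  · simp [apply_ite Int.natAbs, he, Finset.sum_ite_eq', ha]
  · simp [ite_smul, Finset.sum_ite_eq', ha]

/-- Signed-sumset membership for a pair term. -/
lemma fss_pair {G : Type*} [AddCommGroup G] [DecidableEq G] {A : Finset G} {a b : G}
    (ha : a ∈ A) (hb : b ∈ A) (hab : a ≠ b) (ε δ : ℤ)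
    (hε : ε.natAbs = 1) (hδ : δ.natAbs = 1) : ε • a + δ • b ∈ foldSignedSumset 2 A := by
  have hb' : b ∈ A.erase a := Finset.mem_erase.mpr ⟨hab.symm, hb⟩
  refine ⟨fun x => if x = a then ε else if x = b then δ else 0, ?_, ?_⟩
  · rw [← Finset.add_sum_erase A _ ha, ← Finset.add_sum_erase _ _ hb']
    have h0 : ∑ x ∈ (A.erase a).erase b,
        (((if x = a then ε else if x = b then δ else 0) : ℤ)).natAbs = 0 := by
      apply Finset.sum_eq_zero
      intro x hx
      rw [Finset.mem_erase, Finset.mem_erase] at hx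
      simp [hx.1, hx.2.1]
    rw [h0]
    simp [hab.symm, hε, hδ]
  · rw [← Finset.add_sum_erase A _ ha, ← Finset.add_sum_erase _ _ hb']
    have h0 : ∑ x ∈ (A.erase a).erase b,
        ((if x = a then ε else if x = b then δ else 0) : ℤ) • x = 0 := by
      apply Finset.sum_eq_zero
      intro x hx
      rw [Finset.mem_erase, Finset.mem_erase] at hx
      simp [hx.1, hx.2.1]
    rw [h0]
    simp [hab.symm]

/-- Characterization of the 2-fold signed sumset. -/
lemma mem_fss2 {G : Type*} [AddCommGroup G] [DecidableEq G] (A : Finset G) (g : G) :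
    g ∈ foldSignedSumset 2 A ↔
      ((∃ a ∈ A, g = a + a ∨ g = -(a + a)) ∨
       ∃ a ∈ A, ∃ b ∈ A, a ≠ b ∧ (g = a + b ∨ g = a - b ∨ g = -(a + b))) := by
  constructor
  · rintro ⟨c, hsum, hval⟩
    have hzero : ∀ x ∈ A, x ∉ A.filter (fun x => c x ≠ 0) → c x = 0 := by
      intro x hx hnx
      by_contra hc
      exact hnx (Finset.mem_filter.mpr ⟨hx, hc⟩)
    have hsum' : (∑ a ∈ A.filter (fun x => c x ≠ 0), (c a).natAbs) = 2 :=
      (Finset.sum_subset (Finset.filter_subset _ _)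
        (fun x hx hnx => by rw [hzero x hx hnx]; rfl)).trans hsum
    have hval' : (∑ a ∈ A.filter (fun x => c x ≠ 0), c a • a) = g :=
      (Finset.sum_subset (Finset.filter_subset _ _)
        (fun x hx hnx => by rw [hzero x hx hnx, zero_smul])).trans hval
    set S := A.filter (fun x => c x ≠ 0) with hSdef
    have h1 : ∀ x ∈ S, 1 ≤ (c x).natAbs := fun x hx =>
      Nat.one_le_iff_ne_zero.mpr (Int.natAbs_ne_zero.mpr ((Finset.mem_filter.mp hx).2))
    have hcard : S.card ≤ 2 := by
      calc S.card = ∑ _x ∈ S, 1 := by simp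
        _ ≤ ∑ x ∈ S, (c x).natAbs := Finset.sum_le_sum h1
        _ = 2 := hsum'
    have hne : S.card ≠ 0 := by
      intro h0
      rw [Finset.card_eq_zero] at h0
      rw [h0] at hsum'
      simp at hsum'
    have : S.card = 1 ∨ S.card = 2 := by omega
    rcases this with h | h
    · obtain ⟨a, hS⟩ := Finset.card_eq_one.mp h
      rw [hS] at hsum' hval'
      have haA : a ∈ A :=
        Finset.filter_subset _ A (hS ▸ Finset.mem_singleton_self a)
      rw [Finset.sum_singleton] at hsum' hval'
      rcases Int.natAbs_eq_iff.mp hsum' with h2 | h2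
      · left
        exact ⟨a, haA, Or.inl (by rw [← hval', h2]; push_cast; rw [two_smul])⟩
      · left
        refine ⟨a, haA, Or.inr ?_⟩
        rw [← hval', h2]
        push_cast
        rw [neg_smul, two_smul]
    · obtain ⟨a, b, hab, hS⟩ := Finset.card_eq_two.mp h
      rw [hS] at hsum' hval'
      have haA : a ∈ A := Finset.filter_subset _ A (hS ▸ (by simp : a ∈ ({a, b} : Finset G)))
      have hbA : b ∈ A := Finset.filter_subset _ A (hS ▸ (by simp : b ∈ ({a, b} : Finset G)))
      rw [Finset.sum_pair hab] at hsum' hval'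
      have h1a : 1 ≤ (c a).natAbs := h1 a (hS ▸ (by simp : a ∈ ({a, b} : Finset G)))
      have h1b : 1 ≤ (c b).natAbs := h1 b (hS ▸ (by simp : b ∈ ({a, b} : Finset G)))
      have hca : (c a).natAbs = 1 := by omega
      have hcb : (c b).natAbs = 1 := by omega
      rcases Int.natAbs_eq_iff.mp hca with h2 | h2 <;>
        rcases Int.natAbs_eq_iff.mp hcb with h3 | h3 <;>
        rw [h2, h3] at hval' <;> push_cast at hval'
      · exact Or.inr ⟨a, haA, b, hbA, hab, Or.inl (by rw [← hval', one_smul, one_smul])⟩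
      · refine Or.inr ⟨a, haA, b, hbA, hab, Or.inr (Or.inl ?_)⟩
        rw [← hval', one_smul, neg_smul, one_smul, sub_eq_add_neg]
      · refine Or.inr ⟨b, hbA, a, haA, hab.symm, Or.inr (Or.inl ?_)⟩
        rw [← hval', neg_smul, one_smul, one_smul, sub_eq_add_neg, add_comm]
      · refine Or.inr ⟨a, haA, b, hbA, hab, Or.inr (Or.inr ?_)⟩
        rw [← hval', neg_smul, neg_smul, one_smul, one_smul, neg_add]
  · rintro (⟨a, ha, h | h⟩ | ⟨a, ha, b, hb, hab, h | h | h⟩)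
    · have := fss_single ha 2 (by decide)
      rwa [two_smul, ← h] at this
    · have := fss_single ha (-2) (by decide)
      rwa [neg_smul, two_smul, ← h] at this
    · have := fss_pair ha hb hab 1 1 (by decide) (by decide)
      rwa [one_smul, one_smul, ← h] at this
    · have := fss_pair ha hb hab 1 (-1) (by decide) (by decide)
      rwa [one_smul, neg_one_smul, ← sub_eq_add_neg, ← h] at this
    · have := fss_pair ha hb hab (-1) (-1) (by decide) (by decide)
      rwa [neg_one_smul, neg_one_smul, ← neg_add, ← h] at this

lemma G3smul2 : ∀ x : G3, (2 : ZMod 3) • x = -x := fun x => by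
  have h : ((2 : ZMod 3)) • x = x + x := by
    rw [show (2 : ZMod 3) = 1 + 1 by decide, add_smul, one_smul]
  rw [h, G3add2]

/-- Covering lemma: an independent pair inside `A` forces every nonzero element to lie
in the 2-fold signed sumset. -/
lemma cover (A : Finset G3) {u v : G3} (hu : u ∈ A) (hv : v ∈ A)
    (hu0 : u ≠ 0) (hv0 : v ≠ 0) (hvu : v ≠ u) (hvu' : v ≠ -u) :
    ∀ x : G3, x ≠ 0 → x ∈ foldSignedSumset 2 A := by
  have key : ∀ i j : ZMod 3, i • u + j • v = 0 → i = 0 ∧ j = 0 := by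
    intro i j hij
    rcases G3tri i with rfl | rfl | rfl <;> rcases G3tri j with rfl | rfl | rfl <;>
      simp only [zero_smul, one_smul, G3smul2, zero_add, add_zero] at hij
    · exact ⟨rfl, rfl⟩
    · exact absurd hij hv0
    · exact absurd (neg_eq_zero.mp hij) hv0
    · exact absurd hij hu0
    · exact absurd (eq_neg_of_add_eq_zero_right hij) hvu'
    · exact absurd (neg_inj.mp (eq_neg_of_add_eq_zero_right hij)) hvu
    · exact absurd (neg_eq_zero.mp hij) hu0
    · have h1 : v = -(-u) := eq_neg_of_add_eq_zero_right hij
      rw [neg_neg] at h1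
      exact absurd h1 hvu
    · have h1 : -v = -(-u) := eq_neg_of_add_eq_zero_right hij
      rw [neg_neg] at h1
      exact absurd (by rw [← h1, neg_neg] : v = -u) hvu'
  intro x hx
  have hinj : Function.Injective (fun p : ZMod 3 × ZMod 3 => p.1 • u + p.2 • v) := by
    intro p q hpq
    simp only at hpq
    have h0 : (p.1 - q.1) • u + (p.2 - q.2) • v = 0 := by
      rw [sub_smul, sub_smul, sub_add_sub_comm, hpq, sub_self]
    obtain ⟨ha, hb⟩ := key _ _ h0
    exact Prod.ext (sub_eq_zero.mp ha) (sub_eq_zero.mp hb)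
  obtain ⟨⟨i, j⟩, hij⟩ := Finite.injective_iff_surjective.mp hinj x
  simp only at hij
  rw [mem_fss2]
  rcases G3tri i with rfl | rfl | rfl <;> rcases G3tri j with rfl | rfl | rfl <;>
    simp only [zero_smul, one_smul, G3smul2, zero_add, add_zero] at hij
  · exact absurd hij.symm hx
  · exact Or.inl ⟨v, hv, Or.inr (by rw [G3add2, neg_neg]; exact hij.symm)⟩
  · exact Or.inl ⟨v, hv, Or.inl (by rw [G3add2]; exact hij.symm)⟩
  · exact Or.inl ⟨u, hu, Or.inr (by rw [G3add2, neg_neg]; exact hij.symm)⟩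
  · exact Or.inr ⟨u, hu, v, hv, hvu.symm, Or.inl hij.symm⟩
  · exact Or.inr ⟨u, hu, v, hv, hvu.symm,
      Or.inr (Or.inl (by rw [sub_eq_add_neg]; exact hij.symm))⟩
  · exact Or.inl ⟨u, hu, Or.inl (by rw [G3add2]; exact hij.symm)⟩
  · exact Or.inr ⟨v, hv, u, hu, hvu,
      Or.inr (Or.inl (by rw [sub_eq_add_neg, add_comm]; exact hij.symm))⟩
  · exact Or.inr ⟨u, hu, v, hv, hvu.symm,
      Or.inr (Or.inr (by rw [neg_add]; exact hij.symm))⟩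

end Aux

/-- for a 4-subset `A` of `ℤ_3 × ℤ_3`, `2±A = ℤ_3² ∖ {0}` when `A` is
asymmetric, and `2±A = ℤ_3²` otherwise. -/
theorem signedSumset_Z3_Z3_four (A : Finset (ZMod 3 × ZMod 3)) (hA : A.card = 4) :
    (A ∩ -A = ∅ → foldSignedSumset 2 A = {x : ZMod 3 × ZMod 3 | x ≠ 0}) ∧
    (A ∩ -A ≠ ∅ → foldSignedSumset 2 A = Set.univ) := by
  -- find an independent pair `u v ∈ A`
  have hu : ∃ u ∈ A, u ≠ 0 := by
    by_contra h
    push_neg at h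
    have hsub : A ⊆ {0} := fun x hx => by simp [h x hx]
    have := Finset.card_le_card hsub
    simp [hA] at this
  obtain ⟨u, huA, hu0⟩ := hu
  have hv : ∃ v ∈ A, v ≠ 0 ∧ v ≠ u ∧ v ≠ -u := by
    by_contra h
    push_neg at h
    have hsub : A ⊆ {0, u, -u} := by
      intro x hx
      by_cases hx0 : x = 0
      · simp [hx0]
      by_cases hxu : x = u
      · simp [hxu]
      have := h x hx hx0 hxu
      simp [this]
    have hle := Finset.card_le_card hsub
    have h3 : ({0, u, -u} : Finset G3).card ≤ 3 := by
      calc ({0, u, -u} : Finset G3).card ≤ ({u, -u} : Finset G3).card + 1 :=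
            Finset.card_insert_le _ _
        _ ≤ (({-u} : Finset G3).card + 1) + 1 := by
            have := Finset.card_insert_le u ({-u} : Finset G3)
            omega
        _ = 3 := by simp
    omega
  obtain ⟨v, hvA, hv0, hvu, hvu'⟩ := hv
  constructor
  · -- asymmetric case
    intro hasym
    have h0A : (0 : G3) ∉ A := by
      intro h0
      have : (0 : G3) ∈ A ∩ -A := by
        rw [Finset.mem_inter, mem_neg_iff]
        exact ⟨h0, by rwa [neg_zero]⟩
      rw [hasym] at this
      exact absurd this (Finset.notMem_empty 0)
    ext x
    simp only [Set.mem_setOf_eq]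
    constructor
    · intro hx
      rw [mem_fss2] at hx
      intro hx0
      subst hx0
      rcases hx with ⟨a, ha, h | h⟩ | ⟨a, ha, b, hb, hab, h | h | h⟩
      · rw [G3add2] at h
        have ha0 : a = 0 := neg_eq_zero.mp h.symm
        exact h0A (by rwa [ha0] at ha)
      · rw [G3add2, neg_neg] at h
        exact h0A (by rwa [← h] at ha)
      · have hba : b = -a := eq_neg_of_add_eq_zero_right h.symm
        have : a ∈ A ∩ -A := by
          rw [Finset.mem_inter, mem_neg_iff]
          exact ⟨ha, by rwa [← hba]⟩
        rw [hasym] at this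
        exact absurd this (Finset.notMem_empty a)
      · exact hab (sub_eq_zero.mp h.symm)
      · have h' : a + b = 0 := neg_eq_zero.mp h.symm
        have hba : b = -a := eq_neg_of_add_eq_zero_right h'
        have : a ∈ A ∩ -A := by
          rw [Finset.mem_inter, mem_neg_iff]
          exact ⟨ha, by rwa [← hba]⟩
        rw [hasym] at this
        exact absurd this (Finset.notMem_empty a)
    · intro hx
      exact cover A huA hvA hu0 hv0 hvu hvu' x hx
  · -- non-asymmetric case
    intro hne
    obtain ⟨a, haa⟩ := Finset.nonempty_iff_ne_empty.mpr hne
    rw [Finset.mem_inter, mem_neg_iff] at haa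
    obtain ⟨haA, hnaA⟩ := haa
    ext x
    simp only [Set.mem_univ, iff_true]
    by_cases hx : x = 0
    · subst hx
      rw [mem_fss2]
      by_cases ha0 : a = 0
      · subst ha0
        exact Or.inl ⟨0, haA, Or.inl (by simp)⟩
      · refine Or.inr ⟨a, haA, -a, hnaA, ?_, Or.inl (add_neg_cancel a).symm⟩
        intro h
        apply ha0
        have h2 : a + a = 0 := by nth_rewrite 2 [h]; exact add_neg_cancel a
        rw [G3add2] at h2
        exact neg_eq_zero.mp h2
    · exact cover A huA hvA hu0 hv0 hvu hvu' x hx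
end
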